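/- arXiv:2511.04846 — 6 statements merged into one kernel-verified Lean document; each statement's English description precedes it below -/
import Mathlib

section
/- Revelation principle for matching persuasion (Theorem 1): For every stable public signaling policy σ : Ω → Δ(G × 𝓜) with finite signal set G, there exists a stable policy σ' : Ω → Δ(𝓛 × 𝓜) that is indicative and satisfies u(σ') = u(σ). Consequently, the supremum of the principal's expected utility over all stable public policies with finite signal sets is attained by a stable indicative policy of the form σ : Ω → Δ(𝓛 × 𝓜). -/
/-!
Pool all signals that recommend the same matching and whose posteriors induce the same
preference profile, and relabel the pooled signal by that profile. A pooled posterior is a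
mixture of the pooled posteriors, and cells are convex, so it stays in the cell of its profile.
Stability of a matching depends on a belief only through the profile it induces, and the
principal's payoff only through the matching.
-/

open Finset

namespace MP

/-- A probability distribution on a finite type, as a nonnegative function summing to 1. -/
def IsDist {X : Type*} [Fintype X] (p : X → ℝ) : Prop :=
  (∀ x, 0 ≤ p x) ∧ ∑ x, p x = 1

/-- Expected value of `v : Ω → ℝ` under belief `p`. -/
noncomputable def eVal {Ω : Type*} [Fintype Ω] (v : Ω → ℝ) (p : Ω → ℝ) : ℝ :=
  ∑ ω, p ω * v ω

/-- A matching `M : A ≃ B` is stable with respect to belief `p`. -/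
def StableAt {Ω A B : Type*} [Fintype Ω]
    (vA : A → B → Ω → ℝ) (vB : B → A → Ω → ℝ) (M : A ≃ B) (p : Ω → ℝ) : Prop :=
  ∀ a b, eVal (vA a (M a)) p ≥ eVal (vA a b) p ∨ eVal (vB b (M.symm b)) p ≥ eVal (vB b a) p

/-- The principal's utility of matching `M` in world `ω`. -/
noncomputable def uMatch {Ω A B : Type*} [Fintype A]
    (u : A → B → Ω → ℝ) (M : A ≃ B) (ω : Ω) : ℝ :=
  ∑ a, u a (M a) ω

/-- A signaling policy: a distribution over meta-signals `S` for each world. -/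
def IsPolicy {Ω S : Type*} [Fintype S] (σ : Ω → S → ℝ) : Prop :=
  ∀ ω, IsDist (σ ω)

/-- Marginal probability of meta-signal `s`. -/
noncomputable def sigPr {Ω S : Type*} [Fintype Ω] (μ : Ω → ℝ) (σ : Ω → S → ℝ) (s : S) : ℝ :=
  ∑ ω, μ ω * σ ω s

/-- Posterior belief induced by meta-signal `s`. -/
noncomputable def post {Ω S : Type*} [Fintype Ω] (μ : Ω → ℝ) (σ : Ω → S → ℝ) (s : S) : Ω → ℝ :=
  fun ω => μ ω * σ ω s / sigPr μ σ s

/-- Expected utility of a policy, where `util s ω` is the principal's payoff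
of meta-signal `s` in world `ω`. -/
noncomputable def polU {Ω S : Type*} [Fintype Ω] [Fintype S]
    (μ : Ω → ℝ) (σ : Ω → S → ℝ) (util : S → Ω → ℝ) : ℝ :=
  ∑ ω, μ ω * ∑ s, σ ω s * util s ω

/-- Stability of a public policy with meta-signals in `G × (A ≃ B)`. -/
def StablePublic {Ω A B G : Type*} [Fintype Ω]
    (μ : Ω → ℝ) (vA : A → B → Ω → ℝ) (vB : B → A → Ω → ℝ)
    (σ : Ω → (G × (A ≃ B)) → ℝ) : Prop :=
  ∀ s : G × (A ≃ B), 0 < sigPr μ σ s → StableAt vA vB s.2 (post μ σ s)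

/-- A (raw) preference profile: for each agent on either side, a `Bool`-valued
relation on the other side; `L.1 a y y' = true` means `y ⪯_a y'`. -/
abbrev Pref (A B : Type*) := (A → B → B → Bool) × (B → A → A → Bool)

/-- `r` is a total preorder. -/
def TotalPre {X : Type*} (r : X → X → Bool) : Prop :=
  (∀ x y, r x y = true ∨ r y x = true) ∧
  ∀ x y z, r x y = true → r y z = true → r x z = true

/-- A preference profile assigns every agent a total preorder on the other side. -/
def ValidProfile {A B : Type*} (L : Pref A B) : Prop :=
  (∀ a, TotalPre (L.1 a)) ∧ (∀ b, TotalPre (L.2 b))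

/-- `p` lies in the cell `C_⪯` of the profile `L`. -/
def InCell {Ω A B : Type*} [Fintype Ω] (vA : A → B → Ω → ℝ) (vB : B → A → Ω → ℝ)
    (L : Pref A B) (p : Ω → ℝ) : Prop :=
  (∀ a y y', L.1 a y y' = true → eVal (vA a y) p ≤ eVal (vA a y') p) ∧
  (∀ b x x', L.2 b x x' = true → eVal (vB b x) p ≤ eVal (vB b x') p)

/-- An indicative policy: every meta-signal `(⪯, M)` sent with positive probability
consists of a genuine preference profile whose induced posterior lies in `C_⪯`. -/
def Indicative {Ω A B : Type*} [Fintype Ω]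
    (μ : Ω → ℝ) (vA : A → B → Ω → ℝ) (vB : B → A → Ω → ℝ)
    (σ : Ω → (Pref A B × (A ≃ B)) → ℝ) : Prop :=
  ∀ s : Pref A B × (A ≃ B), 0 < sigPr μ σ s →
    ValidProfile s.1 ∧ InCell vA vB s.1 (post μ σ s)

variable {Ω S S' : Type*} [Fintype Ω]

section MapSignal

variable [Fintype S] [DecidableEq S']

noncomputable def mapSignal (σ : Ω → S → ℝ) (f : S → S') : Ω → S' → ℝ :=
  fun ω s' => ∑ s with f s = s', σ ω s

omit [Fintype Ω] in
lemma isPolicy_mapSignal [Fintype S'] {σ : Ω → S → ℝ} (hσ : IsPolicy σ) (f : S → S') :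
    IsPolicy (mapSignal σ f) := fun ω =>
  ⟨fun _ => sum_nonneg fun s _ => (hσ ω).1 s,
    (sum_fiberwise_of_maps_to (fun s _ => mem_univ (f s)) _).trans (hσ ω).2⟩

lemma sum_mul_mapSignal (μ : Ω → ℝ) (σ : Ω → S → ℝ) (f : S → S') (s' : S') (w : Ω → ℝ) :
    ∑ ω, μ ω * mapSignal σ f ω s' * w ω = ∑ s with f s = s', ∑ ω, μ ω * σ ω s * w ω := by
  rw [sum_comm]
  refine sum_congr rfl fun ω _ => ?_
  rw [mapSignal, mul_sum, sum_mul]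

lemma sigPr_mapSignal (μ : Ω → ℝ) (σ : Ω → S → ℝ) (f : S → S') (s' : S') :
    sigPr μ (mapSignal σ f) s' = ∑ s with f s = s', sigPr μ σ s := by
  simp only [sigPr, mapSignal, mul_sum]
  exact sum_comm

lemma exists_sigPr_pos_of_sigPr_mapSignal_pos {μ : Ω → ℝ} {σ : Ω → S → ℝ} {f : S → S'}
    {s' : S'} (hpos : 0 < sigPr μ (mapSignal σ f) s') : ∃ s, f s = s' ∧ 0 < sigPr μ σ s := by
  rw [sigPr_mapSignal] at hpos
  obtain ⟨s, hs, hspos⟩ := exists_lt_of_sum_lt (f := fun _ => 0) (g := sigPr μ σ)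
    (by rwa [sum_const_zero])
  exact ⟨s, (mem_filter.1 hs).2, hspos⟩

lemma polU_mapSignal [Fintype S'] (μ : Ω → ℝ) (σ : Ω → S → ℝ) (f : S → S')
    (util : S' → Ω → ℝ) :
    polU μ (mapSignal σ f) util = polU μ σ (fun s => util (f s)) := by
  refine sum_congr rfl fun ω _ => congrArg (μ ω * ·) ?_
  rw [← sum_fiberwise_of_maps_to (fun s _ => mem_univ (f s))]
  refine sum_congr rfl fun s' _ => ?_
  rw [mapSignal, sum_mul]
  exact sum_congr rfl fun s hs => by dsimp only; rw [(mem_filter.1 hs).2]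

end MapSignal

section Posterior

variable {μ : Ω → ℝ} {σ : Ω → S → ℝ}

lemma sigPr_nonneg (hμ : ∀ ω, 0 ≤ μ ω) (hσ : ∀ ω s, 0 ≤ σ ω s) (s : S) : 0 ≤ sigPr μ σ s :=
  sum_nonneg fun ω _ => mul_nonneg (hμ ω) (hσ ω s)

/-- Also valid for null signals, where `post` divides by zero. -/
lemma eVal_post_mul_sigPr (hμ : ∀ ω, 0 ≤ μ ω) (hσ : ∀ ω s, 0 ≤ σ ω s) (v : Ω → ℝ) (s : S) :
    eVal v (post μ σ s) * sigPr μ σ s = ∑ ω, μ ω * σ ω s * v ω := by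
  by_cases hs : sigPr μ σ s = 0
  · have hnull : ∀ ω, μ ω * σ ω s = 0 := fun ω =>
      (sum_eq_zero_iff_of_nonneg fun ω _ => mul_nonneg (hμ ω) (hσ ω s)).1 hs ω (mem_univ ω)
    simp only [hs, mul_zero, hnull, zero_mul, sum_const_zero]
  · rw [eVal, sum_mul]
    exact sum_congr rfl fun ω _ => by rw [post]; field_simp

/-- The merged posterior is a mixture of the posteriors in the fiber. -/
lemma eVal_post_mapSignal_le [Fintype S] [DecidableEq S'] (hμ : ∀ ω, 0 ≤ μ ω)
    (hσ : ∀ ω s, 0 ≤ σ ω s) {f : S → S'} {s' : S'} {v v' : Ω → ℝ}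
    (hpos : 0 < sigPr μ (mapSignal σ f) s')
    (h : ∀ s, f s = s' → 0 < sigPr μ σ s → eVal v (post μ σ s) ≤ eVal v' (post μ σ s)) :
    eVal v (post μ (mapSignal σ f) s') ≤ eVal v' (post μ (mapSignal σ f) s') := by
  have hσf : ∀ ω s', 0 ≤ mapSignal σ f ω s' := fun ω _ => sum_nonneg fun s _ => hσ ω s
  rw [← mul_le_mul_iff_of_pos_right hpos, eVal_post_mul_sigPr hμ hσf,
    eVal_post_mul_sigPr hμ hσf, sum_mul_mapSignal, sum_mul_mapSignal]
  refine sum_le_sum fun s hs => ?_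
  rw [← eVal_post_mul_sigPr hμ hσ, ← eVal_post_mul_sigPr hμ hσ]
  rcases (sigPr_nonneg hμ hσ s).lt_or_eq with hspos | hnull
  · exact mul_le_mul_of_nonneg_right (h s (mem_filter.1 hs).2 hspos) hspos.le
  · rw [← hnull, mul_zero, mul_zero]

end Posterior

section Profile

variable {A B : Type*} (vA : A → B → Ω → ℝ) (vB : B → A → Ω → ℝ)

noncomputable def profileOf (p : Ω → ℝ) : Pref A B :=
  (fun a y y' => decide (eVal (vA a y) p ≤ eVal (vA a y') p),
   fun b x x' => decide (eVal (vB b x) p ≤ eVal (vB b x') p))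

def ProfileStable (L : Pref A B) (M : A ≃ B) : Prop :=
  ∀ a b, L.1 a b (M a) = true ∨ L.2 b a (M.symm b) = true

lemma totalPre_decide_le {X : Type*} (e : X → ℝ) : TotalPre fun x y => decide (e x ≤ e y) :=
  ⟨fun x y => (le_total (e x) (e y)).imp decide_eq_true decide_eq_true,
    fun _ _ _ hxy hyz => decide_eq_true ((of_decide_eq_true hxy).trans (of_decide_eq_true hyz))⟩

lemma validProfile_profileOf (p : Ω → ℝ) : ValidProfile (profileOf vA vB p) :=
  ⟨fun a => totalPre_decide_le fun y => eVal (vA a y) p,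
    fun b => totalPre_decide_le fun x => eVal (vB b x) p⟩

lemma inCell_profileOf (p : Ω → ℝ) : InCell vA vB (profileOf vA vB p) p :=
  ⟨fun _ _ _ => of_decide_eq_true, fun _ _ _ => of_decide_eq_true⟩

variable {vA vB}

lemma StableAt.profileStable_profileOf {M : A ≃ B} {p : Ω → ℝ} (h : StableAt vA vB M p) :
    ProfileStable (profileOf vA vB p) M :=
  fun a b => (h a b).imp decide_eq_true decide_eq_true

lemma InCell.stableAt {L : Pref A B} {M : A ≃ B} {p : Ω → ℝ} (hL : InCell vA vB L p)
    (hM : ProfileStable L M) : StableAt vA vB M p :=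
  fun a b => (hM a b).imp (hL.1 a b (M a)) (hL.2 b a (M.symm b))

lemma inCell_post_mapSignal [Fintype S] [DecidableEq S'] {μ : Ω → ℝ} (hμ : ∀ ω, 0 ≤ μ ω)
    {σ : Ω → S → ℝ} (hσ : ∀ ω s, 0 ≤ σ ω s) {f : S → S'} {s' : S'} {L : Pref A B}
    (hpos : 0 < sigPr μ (mapSignal σ f) s')
    (h : ∀ s, f s = s' → 0 < sigPr μ σ s → InCell vA vB L (post μ σ s)) :
    InCell vA vB L (post μ (mapSignal σ f) s') :=
  ⟨fun a y y' hL => eVal_post_mapSignal_le hμ hσ hpos fun s hs hspos => (h s hs hspos).1 a y y' hL,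
    fun b x x' hL => eVal_post_mapSignal_le hμ hσ hpos fun s hs hspos => (h s hs hspos).2 b x x' hL⟩

end Profile

theorem revelation_principle_matching_general
    {Ω A B G : Type} [Fintype Ω] [Fintype A] [Fintype B]
    [DecidableEq A] [DecidableEq B] [Fintype G]
    (μ : Ω → ℝ) (hμ : IsDist μ)
    (vA : A → B → Ω → ℝ) (vB : B → A → Ω → ℝ) (u : A → B → Ω → ℝ)
    (σ : Ω → (G × (A ≃ B)) → ℝ)
    (hpol : IsPolicy σ) (hstab : StablePublic μ vA vB σ) :
    ∃ σ' : Ω → (Pref A B × (A ≃ B)) → ℝ,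
      IsPolicy σ' ∧
      (∀ s, 0 < sigPr μ σ' s → StableAt vA vB s.2 (post μ σ' s)) ∧
      Indicative μ vA vB σ' ∧
      polU μ σ' (fun s ω => uMatch u s.2 ω) = polU μ σ (fun s ω => uMatch u s.2 ω) := by
  classical
  have hσ : ∀ ω s, 0 ≤ σ ω s := fun ω => (hpol ω).1
  let f : G × (A ≃ B) → Pref A B × (A ≃ B) := fun s => (profileOf vA vB (post μ σ s), s.2)
  have hind : Indicative μ vA vB (mapSignal σ f) := by
    intro s' hpos
    obtain ⟨s, rfl, -⟩ := exists_sigPr_pos_of_sigPr_mapSignal_pos hpos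
    refine ⟨validProfile_profileOf vA vB _, inCell_post_mapSignal hμ.1 hσ hpos fun t ht _ => ?_⟩
    rw [← congrArg Prod.fst ht]
    exact inCell_profileOf vA vB _
  refine ⟨mapSignal σ f, isPolicy_mapSignal hpol f, fun s' hpos => ?_, hind, polU_mapSignal ..⟩
  obtain ⟨s, rfl, hspos⟩ := exists_sigPr_pos_of_sigPr_mapSignal_pos hpos
  exact (hind _ hpos).2.stableAt (hstab s hspos).profileStable_profileOf

/-- **Revelation principle for matching persuasion** (Theorem 1):
for every stable public policy with finite signal set `G`, there is a stable
indicative policy over meta-signals `𝓛 × 𝓜` achieving the same expected utility.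
In particular, the supremum over stable public policies is attained by a stable
indicative policy of this form. -/
theorem revelation_principle_matching
    {Ω A B G : Type} [Fintype Ω] [Nonempty Ω] [Fintype A] [Fintype B]
    [DecidableEq A] [DecidableEq B] [Fintype G]
    (μ : Ω → ℝ) (hμ : IsDist μ) (hμpos : ∀ ω, 0 < μ ω)
    (vA : A → B → Ω → ℝ) (vB : B → A → Ω → ℝ) (u : A → B → Ω → ℝ)
    (σ : Ω → (G × (A ≃ B)) → ℝ)
    (hpol : IsPolicy σ) (hstab : StablePublic μ vA vB σ) :
    ∃ σ' : Ω → (Pref A B × (A ≃ B)) → ℝ,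
      IsPolicy σ' ∧
      (∀ s, 0 < sigPr μ σ' s → StableAt vA vB s.2 (post μ σ' s)) ∧
      Indicative μ vA vB σ' ∧
      polU μ σ' (fun s ω => uMatch u s.2 ω) = polU μ σ (fun s ω => uMatch u s.2 ω) :=
  revelation_principle_matching_general μ hμ vA vB u σ hpol hstab

end MP
end

section
/- Meta-signals are strictly more powerful than signaling matchings alone (Example 1): Consider the instance with A = {a1,a2}, B = {b1,b2}, Ω = {ω1,ω2}, μ(ω1) = μ(ω2) = 1/2; agents' values: v_{a1}(b1|ω1)=v_{a1}(b1|ω2)=0, v_{a1}(b2|ω1)=−1, v_{a1}(b2|ω2)=2, v_{a2}(b1|·)=0, v_{a2}(b2|·)=1, v_{b1}(a1|·)=1, v_{b1}(a2|·)=0, v_{b2}(a1|·)=0, v_{b2}(a2|ω1)=−2, v_{b2}(a2|ω2)=1; principal utility u(a1,b1|ω)=1 for both worlds and u = 0 for all other pairs. Then: (i) the deterministic policy that in world ω_i sends meta-signal (ω_i, M1), where M1 = {(a1,b1),(a2,b2)}, is stable and yields expected utility 1; (ii) every stable policy of the form σ : Ω → Δ(𝓜) (i.e., whose meta-signals consist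 of the selected matching only) yields expected utility strictly less than 1. -/
open Finset

namespace MP

/-! ### Example 1: the concrete instance -/

/-- Worlds: `0 = ω₁`, `1 = ω₂`; uniform prior. -/
noncomputable def μex : Fin 2 → ℝ := fun _ => 1 / 2

/-- Values of the `A`-side agents (`a = 0` is `a₁`, `b = 0` is `b₁`, `ω = 0` is `ω₁`). -/
noncomputable def vAex : Fin 2 → Fin 2 → Fin 2 → ℝ := fun a b ω =>
  if a = 0 then (if b = 0 then 0 else if ω = 0 then -1 else 2)
  else (if b = 0 then 0 else 1)

/-- Values of the `B`-side agents. -/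
noncomputable def vBex : Fin 2 → Fin 2 → Fin 2 → ℝ := fun b a ω =>
  if b = 0 then (if a = 0 then 1 else 0)
  else (if a = 0 then 0 else if ω = 0 then -2 else 1)

/-- Principal's utility: `1` for the pair `(a₁, b₁)` and `0` otherwise. -/
noncomputable def uex : Fin 2 → Fin 2 → Fin 2 → ℝ := fun a b _ =>
  if a = 0 ∧ b = 0 then 1 else 0

/-- The matching `M₁ = {(a₁,b₁), (a₂,b₂)}`. -/
def M1 : Fin 2 ≃ Fin 2 := Equiv.refl (Fin 2)

/-- The deterministic policy with signal set `G = Ω` that, in world `ωᵢ`,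
sends the meta-signal `(ωᵢ, M₁)`. -/
noncomputable def σex : Fin 2 → (Fin 2 × (Fin 2 ≃ Fin 2)) → ℝ := fun ω s =>
  if s = (ω, M1) then 1 else 0

/-! Revealing the world lets the principal keep `M₁`, which is stable in each world separately.
A policy that only announces the matching earns `1` only by announcing `M₁` with probability `1`
in both worlds; the announcement is then uninformative, and under the prior `(a₁, b₂)` blocks
`M₁`. -/

section Policies

variable {Ω S : Type*}

lemma eVal_single [Fintype Ω] [DecidableEq Ω] (v : Ω → ℝ) (ω : Ω) :
    eVal v (Pi.single ω 1) = v ω := by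
  simp [eVal, Pi.single_apply]

lemma polU_ite_eq [Fintype Ω] [Fintype S] [DecidableEq S] (μ : Ω → ℝ) (σ : Ω → S → ℝ)
    (s₀ : S) : polU μ σ (fun s _ => if s = s₀ then 1 else 0) = sigPr μ σ s₀ := by
  simp [polU, sigPr]

lemma sigPr_of_forall_eq_one [Fintype Ω] {μ : Ω → ℝ} {σ : Ω → S → ℝ} {s : S}
    (h : ∀ ω, σ ω s = 1) : sigPr μ σ s = ∑ ω, μ ω := by
  simp [sigPr, h]

lemma post_of_forall_eq_one [Fintype Ω] {μ : Ω → ℝ} {σ : Ω → S → ℝ} {s : S}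
    (hμ : ∑ ω, μ ω = 1) (h : ∀ ω, σ ω s = 1) : post μ σ s = μ := by
  funext ω
  simp [post, sigPr_of_forall_eq_one h, hμ, h]

lemma forall_eq_one_of_one_le_sigPr [Fintype Ω] [Fintype S] {μ : Ω → ℝ} {σ : Ω → S → ℝ}
    {s : S} (hμ : IsDist μ) (hμ_pos : ∀ ω, 0 < μ ω) (hσ : IsPolicy σ) (h : 1 ≤ sigPr μ σ s) :
    ∀ ω, σ ω s = 1 := by
  have hle : ∀ ω, σ ω s ≤ 1 := fun ω =>
    (hσ ω).2 ▸ single_le_sum (fun s _ => (hσ ω).1 s) (mem_univ s)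
  have hterm_nonneg : ∀ ω ∈ univ, 0 ≤ μ ω * (1 - σ ω s) := fun ω _ =>
    mul_nonneg (hμ_pos ω).le (sub_nonneg.2 (hle ω))
  have hsum : ∑ ω, μ ω * (1 - σ ω s) = 0 := by
    refine le_antisymm ?_ (sum_nonneg hterm_nonneg)
    simp only [mul_sub, mul_one, sum_sub_distrib, hμ.2]
    unfold sigPr at h
    linarith
  intro ω
  have hterm := (sum_eq_zero_iff_of_nonneg hterm_nonneg).1 hsum ω (mem_univ ω)
  linarith [(mul_eq_zero.1 hterm).resolve_left (hμ_pos ω).ne']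

def detPolicy [DecidableEq S] (f : Ω → S) : Ω → S → ℝ :=
  fun ω s => if s = f ω then 1 else 0

lemma isPolicy_detPolicy [Fintype S] [DecidableEq S] (f : Ω → S) : IsPolicy (detPolicy f) :=
  fun ω => ⟨fun s => by unfold detPolicy; split_ifs <;> norm_num, by simp [detPolicy]⟩

lemma polU_detPolicy [Fintype Ω] [Fintype S] [DecidableEq S] (μ : Ω → ℝ) (f : Ω → S)
    (util : S → Ω → ℝ) : polU μ (detPolicy f) util = ∑ ω, μ ω * util (f ω) ω := by
  simp [polU, detPolicy]

lemma sigPr_detPolicy_apply [Fintype Ω] [DecidableEq S] (μ : Ω → ℝ) {f : Ω → S}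
    (hf : f.Injective) (ω : Ω) : sigPr μ (detPolicy f) (f ω) = μ ω := by
  refine (sum_eq_single ω (fun ω' _ hne => ?_) (by simp)).trans (by simp [detPolicy])
  simp [detPolicy, hf.ne (Ne.symm hne)]

lemma sigPr_detPolicy_of_notMem_range [Fintype Ω] [DecidableEq S] (μ : Ω → ℝ) {f : Ω → S}
    {s : S} (hs : s ∉ Set.range f) : sigPr μ (detPolicy f) s = 0 := by
  simp only [Set.mem_range, not_exists] at hs
  simp [sigPr, detPolicy, fun ω => Ne.symm (hs ω)]

lemma post_detPolicy_apply [Fintype Ω] [DecidableEq Ω] [DecidableEq S] {μ : Ω → ℝ}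
    {f : Ω → S} (hf : f.Injective) {ω : Ω} (hμ : μ ω ≠ 0) :
    post μ (detPolicy f) (f ω) = Pi.single ω 1 := by
  funext ω'
  rw [post, sigPr_detPolicy_apply μ hf]
  by_cases h : ω' = ω
  · subst h; simp [detPolicy, hμ]
  · simp [detPolicy, hf.eq_iff, h, Ne.symm h]

lemma stablePublic_detPolicy [Fintype Ω] [DecidableEq Ω] {A B G : Type*}
    [DecidableEq (G × (A ≃ B))] (μ : Ω → ℝ) (vA : A → B → Ω → ℝ) (vB : B → A → Ω → ℝ)
    {f : Ω → G × (A ≃ B)} (hf : f.Injective)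
    (hstab : ∀ ω, StableAt vA vB (f ω).2 (Pi.single ω 1)) :
    StablePublic μ vA vB (detPolicy f) := by
  intro s hs
  by_cases hrange : s ∈ Set.range f
  · obtain ⟨ω, rfl⟩ := hrange
    rw [sigPr_detPolicy_apply μ hf] at hs
    rw [post_detPolicy_apply hf hs.ne']
    exact hstab ω
  · rw [sigPr_detPolicy_of_notMem_range μ hrange] at hs
    exact absurd hs (lt_irrefl 0)

end Policies

lemma isDist_μex : IsDist μex :=
  ⟨fun _ => by norm_num [μex], by norm_num [μex]⟩

lemma μex_pos (ω : Fin 2) : 0 < μex ω := by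
  norm_num [μex]

lemma σex_eq_detPolicy : σex = detPolicy fun ω => (ω, M1) := rfl

lemma uMatch_uex (M : Fin 2 ≃ Fin 2) (ω : Fin 2) :
    uMatch uex M ω = if M = M1 then 1 else 0 := by
  have hM : M = M1 ↔ M 0 = 0 := by revert M; decide
  simp only [uMatch, uex, Fin.sum_univ_two]
  simp [hM]

lemma stableAt_M1_single (ω : Fin 2) : StableAt vAex vBex M1 (Pi.single ω 1) := by
  intro a b
  simp only [eVal_single]
  fin_cases ω <;> fin_cases a <;> fin_cases b <;> norm_num [vAex, vBex, M1]

/-- `a₁` expects `1/2 > 0` from `b₂`, and `b₂` expects `0 > -1/2` from `a₁`. -/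
lemma not_stableAt_M1_μex : ¬ StableAt vAex vBex M1 μex := by
  intro h
  rcases h 0 1 with h | h <;> norm_num [eVal, μex, vAex, vBex, M1, Fin.sum_univ_two] at h

/-- **Example 1**: meta-signals are strictly more powerful than signaling
matchings alone.  (i) The deterministic policy revealing the world and always
selecting `M₁` is a stable policy of expected utility `1`;  (ii) every stable
policy whose meta-signals consist of the selected matching alone has expected
utility strictly below `1`. -/
theorem metasignals_beat_matching_signals :
    (IsPolicy σex ∧ StablePublic μex vAex vBex σex ∧
      polU μex σex (fun s ω => uMatch uex s.2 ω) = 1) ∧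
    (∀ σ : Fin 2 → (Fin 2 ≃ Fin 2) → ℝ,
      IsPolicy σ →
      (∀ M : Fin 2 ≃ Fin 2, 0 < sigPr μex σ M → StableAt vAex vBex M (post μex σ M)) →
      polU μex σ (fun M ω => uMatch uex M ω) < 1) := by
  have hinj : Function.Injective fun ω : Fin 2 => (ω, M1) := fun _ _ h => (Prod.mk.inj h).1
  refine ⟨⟨?_, ?_, ?_⟩, ?_⟩
  · exact σex_eq_detPolicy ▸ isPolicy_detPolicy _
  · exact σex_eq_detPolicy ▸ stablePublic_detPolicy μex vAex vBex hinj stableAt_M1_single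
  · simp [σex_eq_detPolicy, polU_detPolicy, uMatch_uex, isDist_μex.2]
  · intro σ hσ hstab
    by_contra! h
    have hU : polU μex σ (fun M ω => uMatch uex M ω) = sigPr μex σ M1 := by
      simp_rw [uMatch_uex]
      exact polU_ite_eq μex σ M1
    have hM1 := forall_eq_one_of_one_le_sigPr isDist_μex μex_pos hσ (hU ▸ h)
    apply not_stableAt_M1_μex
    rw [← post_of_forall_eq_one isDist_μex.2 hM1]
    exact hstab M1 (by rw [sigPr_of_forall_eq_one hM1, isDist_μex.2]; exact one_pos)

end MP
end

section
/- Stability is inherited along prototype inclusion (Observation in Section 4): In the type-based model, suppose matching M has prototype P, matching M' has prototype P', and P' ⊆ P. If M is stable with respect to a belief p ∈ Δ(Ω), then M' is also stable with respect to p. -/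
open Finset

namespace MP

/-- The prototype of a matching `M` in the type-based model: the set of class
pairs `(i,j)` such that some pair of `M` consists of an `A_i`-agent and a
`B_j`-agent. -/
def Prototype {A B : Type*} {T : ℕ} (tA : A → Fin T) (tB : B → Fin T)
    (M : A ≃ B) : Set (Fin T × Fin T) :=
  {st | ∃ a, tA a = st.1 ∧ tB (M a) = st.2}

/-- **Stability is inherited along prototype inclusion**: in the type-based
model, if the prototype of `M'` is contained in the prototype of `M` and `M`
is stable with respect to `p`, then so is `M'`. -/
theorem stableAt_of_prototype_subset
    {Ω A B : Type} [Fintype Ω] [Nonempty Ω] [Fintype A] [Fintype B]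
    [DecidableEq A] [DecidableEq B] {T : ℕ}
    (tA : A → Fin T) (tB : B → Fin T)
    (VA VB : Fin T → Fin T → Ω → ℝ)
    (vA : A → B → Ω → ℝ) (vB : B → A → Ω → ℝ)
    (hvA : ∀ a b ω, vA a b ω = VA (tA a) (tB b) ω)
    (hvB : ∀ b a ω, vB b a ω = VB (tB b) (tA a) ω)
    (M M' : A ≃ B) (p : Ω → ℝ) (hp : IsDist p)
    (hsub : Prototype tA tB M' ⊆ Prototype tA tB M)
    (hM : StableAt vA vB M p) :
    StableAt vA vB M' p := by
  have keyA : ∀ a b, eVal (vA a b) p = ∑ ω, p ω * VA (tA a) (tB b) ω := by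
    intro a b; simp [eVal, hvA]
  have keyB : ∀ b a, eVal (vB b a) p = ∑ ω, p ω * VB (tB b) (tA a) ω := by
    intro b a; simp [eVal, hvB]
  intro a b
  obtain ⟨a₁, h1A, h1B⟩ := hsub (⟨a, rfl, rfl⟩ :
    (tA a, tB (M' a)) ∈ Prototype tA tB M')
  obtain ⟨a₂, h2A, h2B⟩ := hsub (⟨M'.symm b, rfl, by simp⟩ :
    (tA (M'.symm b), tB b) ∈ Prototype tA tB M')
  rcases hM a₁ (M a₂) with h | h
  · left
    rw [keyA, keyA] at h ⊢
    rw [h1A, h1B, h2B] at h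
    exact h
  · right
    rw [keyB, keyB] at h ⊢
    rw [Equiv.symm_apply_apply, h1A, h2A, h2B] at h
    exact h

end MP
end

section
/- Polynomial bound on the number of realized strict preference profiles (Lemma 7): For every d ≥ 1 there exists a constant c_d such that the following holds for every matching-persuasion instance with |Ω| = d and n agents on each side: the number of strict preference profiles ≺ for which there exists p ∈ Δ(Ω) with v_x(y | p) < v_x(y' | p) for every agent x and all y, y' with y ≺_x y' is at most c_d · n^{3d}. -/
open Finset

namespace MP

/-- `r` is a strict total order (written `r x y ↔ x ≺ y`). -/
def StrictOrd {X : Type*} (r : X → X → Bool) : Prop :=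
  (∀ x, r x x = false) ∧
  (∀ x y z, r x y = true → r y z = true → r x z = true) ∧
  (∀ x y, x ≠ y → (r x y = true ∨ r y x = true))

/-- A strict preference profile: each agent has a strict total order. -/
def StrictProfile {A B : Type*} (L : Pref A B) : Prop :=
  (∀ a, StrictOrd (L.1 a)) ∧ (∀ b, StrictOrd (L.2 b))

/-- The set of realized strict sign patterns of a family of linear forms. -/
def Realized {D : ℕ} {I : Type*} (f : I → ((Fin D → ℝ) →ₗ[ℝ] ℝ)) : Set (I → Bool) :=
  {σ | ∃ p : Fin D → ℝ, ∀ i, if σ i = true then 0 < f i p else f i p < 0}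

set_option maxHeartbeats 1000000 in
lemma realized_ncard_le :
    ∀ (m D : ℕ) (f : Fin m → ((Fin D → ℝ) →ₗ[ℝ] ℝ)),
      (Realized f).ncard ≤ (2 * m + 1) ^ D := by
  intro m
  induction m with
  | zero =>
      intro D f
      have h1 : (Realized f).ncard ≤ (Set.univ : Set (Fin 0 → Bool)).ncard :=
        Set.ncard_le_ncard (Set.subset_univ _) Set.finite_univ
      have h2 : (Set.univ : Set (Fin 0 → Bool)).ncard = 1 := by
        rw [Set.ncard_univ]
        simp [Nat.card_eq_fintype_card]
      simpa [h2] using h1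
  | succ m ih =>
      intro D f
      set f' := f (Fin.last m) with hf'def
      by_cases hf0 : f' = 0
      · -- no pattern can be strict at the last index
        have he : Realized f = ∅ := by
          ext σ
          simp only [Set.mem_empty_iff_false, iff_false]
          rintro ⟨p, hp⟩
          have := hp (Fin.last m)
          rw [← hf'def, hf0] at this
          by_cases hσ : σ (Fin.last m) = true <;> simp [hσ] at this
        rw [he, Set.ncard_empty]
        exact Nat.zero_le _
      · -- f' ≠ 0, hence D ≥ 1, kernel has finrank < D
        have hD : 1 ≤ D := by
          by_contra h
          have hD0 : D = 0 := by omega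
          apply hf0
          subst hD0
          apply LinearMap.ext
          intro p
          rw [Subsingleton.elim p 0, map_zero]
          rfl
        set g : Fin m → ((Fin D → ℝ) →ₗ[ℝ] ℝ) := fun i => f i.castSucc with hg
        set K := LinearMap.ker f' with hK
        haveI : FiniteDimensional ℝ (Fin D → ℝ) := inferInstance
        have hKne : K ≠ ⊤ := by
          intro h
          apply hf0
          apply LinearMap.ext
          intro p
          have : p ∈ K := h ▸ Submodule.mem_top
          simpa [hK, LinearMap.mem_ker] using this
        have hrlt : Module.finrank ℝ K < D := by
          have h1 : Module.finrank ℝ K < Module.finrank ℝ (Fin D → ℝ) := by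
            have := Submodule.finrank_lt_finrank_of_lt (s := K) (t := ⊤)
              (lt_top_iff_ne_top.mpr hKne)
            simpa using this
          simpa using h1
        set r := Module.finrank ℝ K with hr
        obtain ⟨e⟩ : Nonempty (K ≃ₗ[ℝ] (Fin r → ℝ)) := ⟨(Module.finBasis ℝ K).equivFun⟩
        set h : Fin m → ((Fin r → ℝ) →ₗ[ℝ] ℝ) :=
          fun i => ((g i).comp K.subtype).comp (e.symm : (Fin r → ℝ) →ₗ[ℝ] K) with hh
        -- the restriction map dropping the last coordinate
        set F : (Fin (m + 1) → Bool) → (Fin m → Bool) := fun σ => σ ∘ Fin.castSucc with hF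
        have hFdet : ∀ σ σ' : Fin (m + 1) → Bool, F σ = F σ' →
            σ (Fin.last m) = σ' (Fin.last m) → σ = σ' := by
          intro σ σ' h1 h2
          funext i
          refine Fin.lastCases h2 (fun j => ?_) i
          exact congrFun h1 j
        -- Claim A : restriction of a realized pattern is realized
        have claimA : ∀ σ ∈ Realized f, F σ ∈ Realized g := by
          rintro σ ⟨p, hp⟩
          exact ⟨p, fun i => hp i.castSucc⟩
        -- Claim B : if both extensions are realized, the restriction is realized on the kernel
        have claimB : ∀ σ σ' : Fin (m + 1) → Bool, σ ∈ Realized f → σ' ∈ Realized f →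
            F σ = F σ' → σ (Fin.last m) = true → σ' (Fin.last m) = false →
            F σ ∈ Realized h := by
          rintro σ σ' ⟨p, hp⟩ ⟨p', hp'⟩ hFF hlt hlf
          have hsp : 0 < f' p := by
            have := hp (Fin.last m); rw [hlt] at this; simpa using this
          have hsn : f' p' < 0 := by
            have := hp' (Fin.last m); rw [hlf] at this; simpa using this
          set s : ℝ := f' p with hs
          set t : ℝ := -(f' p') with ht
          have hspos : 0 < s := hsp
          have htpos : 0 < t := by rw [ht]; linarith
          set q0 : Fin D → ℝ := t • p + s • p' with hq0
          have hq0K : q0 ∈ K := by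
            simp only [hK, LinearMap.mem_ker, hq0, map_add, map_smul, smul_eq_mul]
            rw [← hs]
            simp [ht]; ring
          refine ⟨e ⟨q0, hq0K⟩, fun i => ?_⟩
          have hval : h i (e ⟨q0, hq0K⟩) = g i q0 := by
            simp [hh]
          have hgq : g i q0 = t * g i p + s * g i p' := by
            simp [hq0, map_add, map_smul, smul_eq_mul]
          have h1 := hp i.castSucc
          have h2 := hp' i.castSucc
          have hFi : σ' i.castSucc = σ i.castSucc := (congrFun hFF i).symm
          rw [hFi] at h2
          have hFσ : (F σ) i = σ i.castSucc := rfl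
          by_cases hσi : σ i.castSucc = true
          · have h1' : 0 < f i.castSucc p := by simpa [hσi] using h1
            have h2' : 0 < f i.castSucc p' := by simpa [hσi] using h2
            rw [hFσ, hσi, if_pos rfl, hval, hgq]
            have hg1 : (g i) p = f i.castSucc p := rfl
            have hg2 : (g i) p' = f i.castSucc p' := rfl
            rw [hg1, hg2]
            nlinarith
          · have hσi' : σ i.castSucc = false := by
              cases hb : σ i.castSucc
              · rfl
              · exact absurd hb hσi
            have h1' : f i.castSucc p < 0 := by simpa [hσi'] using h1
            have h2' : f i.castSucc p' < 0 := by simpa [hσi'] using h2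
            rw [hFσ, hσi', if_neg (by simp), hval, hgq]
            have hg1 : (g i) p = f i.castSucc p := rfl
            have hg2 : (g i) p' = f i.castSucc p' := rfl
            rw [hg1, hg2]
            nlinarith
        -- split Realized f
        set A : Set (Fin (m + 1) → Bool) := {σ ∈ Realized f | F σ ∈ Realized h} with hA
        set B : Set (Fin (m + 1) → Bool) := {σ ∈ Realized f | F σ ∉ Realized h} with hB
        have hsplit : Realized f ⊆ A ∪ B := by
          intro σ hσ
          by_cases hc : F σ ∈ Realized h
          · exact Or.inl ⟨hσ, hc⟩
          · exact Or.inr ⟨hσ, hc⟩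
        have hcardB : B.ncard ≤ (Realized g).ncard := by
          have hinj : Set.InjOn F B := by
            rintro σ ⟨hσ, hσK⟩ σ' ⟨hσ', hσ'K⟩ hFF
            by_cases hl : σ (Fin.last m) = σ' (Fin.last m)
            · exact hFdet _ _ hFF hl
            · exfalso
              cases hb : σ (Fin.last m) <;> cases hb' : σ' (Fin.last m)
              · exact hl (hb.trans hb'.symm)
              · exact hσ'K (hFF ▸ claimB σ' σ hσ' hσ hFF.symm hb' hb)
              · exact hσK (claimB σ σ' hσ hσ' hFF hb hb')
              · exact hl (hb.trans hb'.symm)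
          calc B.ncard = (F '' B).ncard := (Set.ncard_image_of_injOn hinj).symm
            _ ≤ (Realized g).ncard := by
                apply Set.ncard_le_ncard _ (Set.toFinite _)
                rintro τ ⟨σ, ⟨hσ, _⟩, rfl⟩
                exact claimA σ hσ
        have hcardA : A.ncard ≤ 2 * (Realized h).ncard := by
          set At : Set (Fin (m+1) → Bool) := {σ ∈ A | σ (Fin.last m) = true} with hAt
          set Af : Set (Fin (m+1) → Bool) := {σ ∈ A | σ (Fin.last m) = false} with hAf
          have hsub : A ⊆ At ∪ Af := by
            intro σ hσ
            cases hb : σ (Fin.last m)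
            · exact Or.inr ⟨hσ, hb⟩
            · exact Or.inl ⟨hσ, hb⟩
          have hbound : ∀ (S : Set (Fin (m+1) → Bool)) (b : Bool), S ⊆ A →
              (∀ σ ∈ S, σ (Fin.last m) = b) → S.ncard ≤ (Realized h).ncard := by
            intro S b hSA hSb
            have hinj : Set.InjOn F S := by
              intro σ hσ σ' hσ' hFF
              exact hFdet _ _ hFF ((hSb σ hσ).trans (hSb σ' hσ').symm)
            calc S.ncard = (F '' S).ncard := (Set.ncard_image_of_injOn hinj).symm
              _ ≤ (Realized h).ncard := by
                  apply Set.ncard_le_ncard _ (Set.toFinite _)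
                  rintro τ ⟨σ, hσ, rfl⟩
                  exact (hSA hσ).2
          calc A.ncard ≤ (At ∪ Af).ncard := Set.ncard_le_ncard hsub (Set.toFinite _)
            _ ≤ At.ncard + Af.ncard := Set.ncard_union_le _ _
            _ ≤ (Realized h).ncard + (Realized h).ncard := by
                gcongr
                · exact hbound At true (fun σ hσ => hσ.1) (fun σ hσ => hσ.2)
                · exact hbound Af false (fun σ hσ => hσ.1) (fun σ hσ => hσ.2)
            _ = 2 * (Realized h).ncard := by ring
        have hmain : (Realized f).ncard ≤ (Realized g).ncard + 2 * (Realized h).ncard := by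
          calc (Realized f).ncard ≤ (A ∪ B).ncard :=
                Set.ncard_le_ncard hsplit (Set.toFinite _)
            _ ≤ A.ncard + B.ncard := Set.ncard_union_le _ _
            _ ≤ 2 * (Realized h).ncard + (Realized g).ncard := by gcongr
            _ = (Realized g).ncard + 2 * (Realized h).ncard := by ring
        have hbg := ih D g
        have hbh : (Realized h).ncard ≤ (2 * m + 1) ^ (D - 1) := by
          calc (Realized h).ncard ≤ (2 * m + 1) ^ r := ih r h
            _ ≤ (2 * m + 1) ^ (D - 1) := Nat.pow_le_pow_right (by omega) (by omega)
        -- arithmetic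
        obtain ⟨e', rfl⟩ : ∃ e', D = e' + 1 := ⟨D - 1, by omega⟩
        have harith : (2 * m + 1) ^ (e' + 1) + 2 * (2 * m + 1) ^ e'
            ≤ (2 * (m + 1) + 1) ^ (e' + 1) := by
          have h1 : (2 * m + 1) ^ e' ≤ (2 * m + 3) ^ e' :=
            Nat.pow_le_pow_left (by omega) _
          calc (2 * m + 1) ^ (e' + 1) + 2 * (2 * m + 1) ^ e'
              = (2 * m + 3) * (2 * m + 1) ^ e' := by ring
            _ ≤ (2 * m + 3) * (2 * m + 3) ^ e' := by
                exact Nat.mul_le_mul_left _ h1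
            _ = (2 * (m + 1) + 1) ^ (e' + 1) := by ring
        have hDm : e' + 1 - 1 = e' := by omega
        rw [hDm] at hbh
        calc (Realized f).ncard ≤ (Realized g).ncard + 2 * (Realized h).ncard := hmain
          _ ≤ (2 * m + 1) ^ (e' + 1) + 2 * (2 * m + 1) ^ e' := by gcongr
          _ ≤ (2 * (m + 1) + 1) ^ (e' + 1) := harith

/-- The linear form `p ↦ ∑ ω, w ω * p ω`. -/
noncomputable def formOf {d : ℕ} (w : Fin d → ℝ) : (Fin d → ℝ) →ₗ[ℝ] ℝ :=
  ∑ ω, w ω • LinearMap.proj ω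

lemma formOf_apply {d : ℕ} (w p : Fin d → ℝ) : formOf w p = ∑ ω, w ω * p ω := by
  simp [formOf, LinearMap.sum_apply]

set_option maxHeartbeats 1000000 in
/-- **Polynomial bound on the number of realized strict preference profiles**
(Lemma 7): for every number of worlds `d` there is a constant `c` such that, in
any instance with `d` worlds and `n` agents per side, the number of strict
preference profiles induced by some belief `p ∈ Δ(Ω)` (with all inequalities
strict) is at most `c * n ^ (3 d)`. -/
theorem card_realized_strict_profiles_le (d : ℕ) (hd : 1 ≤ d) :
    ∃ c : ℕ, ∀ n : ℕ, 1 ≤ n →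
      ∀ (vA : Fin n → Fin n → Fin d → ℝ) (vB : Fin n → Fin n → Fin d → ℝ),
        Set.ncard {L : Pref (Fin n) (Fin n) |
          StrictProfile L ∧
          ∃ p : Fin d → ℝ, IsDist p ∧
            (∀ a y y', L.1 a y y' = true → eVal (vA a y) p < eVal (vA a y') p) ∧
            (∀ b x x', L.2 b x x' = true → eVal (vB b x) p < eVal (vB b x') p)}
          ≤ c * n ^ (3 * d) := by
  refine ⟨5 ^ d, fun n hn vA vB => ?_⟩
  classical
  set S := {L : Pref (Fin n) (Fin n) |
          StrictProfile L ∧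
          ∃ p : Fin d → ℝ, IsDist p ∧
            (∀ a y y', L.1 a y y' = true → eVal (vA a y) p < eVal (vA a y') p) ∧
            (∀ b x x', L.2 b x x' = true → eVal (vB b x) p < eVal (vB b x') p)} with hS
  set I := (Fin n × Fin n × Fin n) ⊕ (Fin n × Fin n × Fin n) with hI
  set M := Fintype.card I with hM
  set E : I ≃ Fin M := Fintype.equivFin I with hE
  set w : I → Fin d → ℝ := Sum.elim
      (fun z => if z.2.1 = z.2.2 then (fun _ => (-1 : ℝ))
        else (fun ω => vA z.1 z.2.2 ω - vA z.1 z.2.1 ω))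
      (fun z => if z.2.1 = z.2.2 then (fun _ => (-1 : ℝ))
        else (fun ω => vB z.1 z.2.2 ω - vB z.1 z.2.1 ω)) with hw
  set Ff : Fin M → ((Fin d → ℝ) →ₗ[ℝ] ℝ) := fun j => formOf (w (E.symm j)) with hFf
  set pat : Pref (Fin n) (Fin n) → I → Bool := fun L => Sum.elim
      (fun z => L.1 z.1 z.2.1 z.2.2) (fun z => L.2 z.1 z.2.1 z.2.2) with hpat
  set Φ : Pref (Fin n) (Fin n) → (Fin M → Bool) := fun L j => pat L (E.symm j) with hΦ
  -- the key pointwise fact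
  have key : ∀ L ∈ S, ∀ p : Fin d → ℝ, IsDist p →
      (∀ a y y', L.1 a y y' = true → eVal (vA a y) p < eVal (vA a y') p) →
      (∀ b x x', L.2 b x x' = true → eVal (vB b x) p < eVal (vB b x') p) →
      ∀ i : I, if pat L i = true then 0 < formOf (w i) p else formOf (w i) p < 0 := by
    rintro L ⟨hsp, -⟩ p hp h1 h2 i
    have hsum : ∀ v v' : Fin d → ℝ,
        formOf (fun ω => v' ω - v ω) p = eVal v' p - eVal v p := by
      intro v v'
      rw [formOf_apply, eVal, eVal, ← Finset.sum_sub_distrib]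
      congr 1; funext ω; ring
    have hneg : formOf (fun _ => (-1 : ℝ)) p = -1 := by
      rw [formOf_apply]
      have : ∑ ω, (-1 : ℝ) * p ω = -(∑ ω, p ω) := by
        rw [← Finset.sum_neg_distrib]; congr 1; funext ω; ring
      rw [this, hp.2]
    obtain (⟨a, y, y'⟩ | ⟨b, x, x'⟩) := i
    · have hirr := (hsp.1 a).1
      have htot := (hsp.1 a).2.2
      by_cases hb : L.1 a y y' = true
      · have hyy : y ≠ y' := by
          intro h; subst h; rw [hirr y] at hb; exact Bool.false_ne_true hb
        have hpL : pat L (Sum.inl (a, y, y')) = true := hb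
        rw [hpL, if_pos rfl]
        have hwv : w (Sum.inl (a, y, y')) = fun ω => vA a y' ω - vA a y ω := by
          simp [hw, hyy]
        rw [hwv, hsum]
        exact sub_pos.mpr (h1 a y y' hb)
      · have hbf : L.1 a y y' = false := by
          cases hq : L.1 a y y'
          · rfl
          · exact absurd hq hb
        have hpL : pat L (Sum.inl (a, y, y')) = false := hbf
        rw [hpL, if_neg (by simp)]
        by_cases hyy : y = y'
        · have hwv : w (Sum.inl (a, y, y')) = fun _ => (-1 : ℝ) := by
            simp [hw, hyy]
          rw [hwv, hneg]; norm_num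
        · have hrev : L.1 a y' y = true := by
            rcases htot y y' hyy with h | h
            · exact absurd h hb
            · exact h
          have hwv : w (Sum.inl (a, y, y')) = fun ω => vA a y' ω - vA a y ω := by
            simp [hw, hyy]
          rw [hwv, hsum]
          have := h1 a y' y hrev
          linarith
    · have hirr := (hsp.2 b).1
      have htot := (hsp.2 b).2.2
      by_cases hb : L.2 b x x' = true
      · have hxx : x ≠ x' := by
          intro h; subst h; rw [hirr x] at hb; exact Bool.false_ne_true hb
        have hpL : pat L (Sum.inr (b, x, x')) = true := hb
        rw [hpL, if_pos rfl]
        have hwv : w (Sum.inr (b, x, x')) = fun ω => vB b x' ω - vB b x ω := by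
          simp [hw, hxx]
        rw [hwv, hsum]
        exact sub_pos.mpr (h2 b x x' hb)
      · have hbf : L.2 b x x' = false := by
          cases hq : L.2 b x x'
          · rfl
          · exact absurd hq hb
        have hpL : pat L (Sum.inr (b, x, x')) = false := hbf
        rw [hpL, if_neg (by simp)]
        by_cases hxx : x = x'
        · have hwv : w (Sum.inr (b, x, x')) = fun _ => (-1 : ℝ) := by
            simp [hw, hxx]
          rw [hwv, hneg]; norm_num
        · have hrev : L.2 b x' x = true := by
            rcases htot x x' hxx with h | h
            · exact absurd h hb
            · exact h
          have hwv : w (Sum.inr (b, x, x')) = fun ω => vB b x' ω - vB b x ω := by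
            simp [hw, hxx]
          rw [hwv, hsum]
          have := h2 b x' x hrev
          linarith
  -- Φ maps S into the realized patterns
  have himg : Φ '' S ⊆ Realized Ff := by
    rintro τ ⟨L, hL, rfl⟩
    obtain ⟨hsp, p, hp, h1, h2⟩ := hL
    exact ⟨p, fun j => key L ⟨hsp, p, hp, h1, h2⟩ p hp h1 h2 (E.symm j)⟩
  -- Φ is injective on S
  have hinj : Set.InjOn Φ S := by
    intro L hL L' hL' hΦeq
    have hpe : pat L = pat L' := by
      funext i
      have := congrFun hΦeq (E i)
      simpa [hΦ, hE] using this
    have hL1 : L.1 = L'.1 := by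
      funext a y y'
      exact congrFun hpe (Sum.inl (a, y, y'))
    have hL2 : L.2 = L'.2 := by
      funext b x x'
      exact congrFun hpe (Sum.inr (b, x, x'))
    exact Prod.ext hL1 hL2
  have hMval : M = 2 * n ^ 3 := by
    simp [hM, hI]
    ring
  have hn3 : 1 ≤ n ^ 3 := Nat.one_le_pow _ _ (by omega)
  calc S.ncard = (Φ '' S).ncard := (Set.ncard_image_of_injOn hinj).symm
    _ ≤ (Realized Ff).ncard := Set.ncard_le_ncard himg (Set.toFinite _)
    _ ≤ (2 * M + 1) ^ d := realized_ncard_le M d Ff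
    _ ≤ (5 * n ^ 3) ^ d := Nat.pow_le_pow_left (by rw [hMval]; omega) d
    _ = 5 ^ d * (n ^ 3) ^ d := mul_pow _ _ _
    _ = 5 ^ d * n ^ (3 * d) := by rw [← pow_mul]


end MP
end

section
/- Support size bounded by the number of worlds (Lemma 9): For every stable indicative policy σ : Ω → Δ(𝓛 × 𝓜), there exists a stable indicative policy σ' : Ω → Δ(𝓛 × 𝓜) whose support {(⪯,M) : σ'(⪯,M | ω) > 0 for some ω} has cardinality at most |Ω|, and which satisfies u(σ') ≥ u(σ). -/
/-!
A policy is determined by its joint columns `x_s = μ · σ(·, s) ∈ ℝ^Ω`, which sum to `μ`.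
Scaling the probability of each meta-signal `s` by a factor `w_s > 0` in every world leaves
its posterior unchanged, so stability and indicativeness survive, and the principal's utility
is linear in `w`. The feasible weights, `w ≥ 0` with `∑ w_s x_s = μ`, form a polytope; as long
as the columns in use are linearly dependent, moving along a dependency in a direction that does
not decrease the utility drives some weight to zero. Once the columns in use are independent,
there are at most `dim ℝ^Ω = |Ω|` of them.
-/

open Finset

namespace MP

open Module

section Reduction

variable {S E : Type*} [AddCommGroup E] [Module ℝ E]

lemma exists_neg_coeff_of_sum_smul_eq_zero (f : E →ₗ[ℝ] ℝ) {x : S → E} {T : Finset S}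
    (hpos : ∀ s ∈ T, 0 < f (x s)) {e : S → ℝ} (he : ∑ s ∈ T, e s • x s = 0)
    (hne : ∃ s ∈ T, e s ≠ 0) : ∃ s ∈ T, e s < 0 := by
  obtain ⟨s₁, hs₁, he₁⟩ := hne
  by_contra! hnonneg
  have hsum : ∑ s ∈ T, e s * f (x s) = 0 := by
    simpa only [map_sum, map_smul, smul_eq_mul, map_zero] using congrArg f he
  have h₁ := (sum_eq_zero_iff_of_nonneg fun s hs ↦
    mul_nonneg (hnonneg s hs) (hpos s hs).le).mp hsum s₁ hs₁
  exact he₁ ((mul_eq_zero.mp h₁).resolve_right (hpos s₁ hs₁).ne')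

lemma exists_relation_of_not_linearIndepOn (f : E →ₗ[ℝ] ℝ) {x : S → E} {T : Finset S}
    (hpos : ∀ s ∈ T, 0 < f (x s)) (c : S → ℝ) (hdep : ¬ LinearIndepOn ℝ x (T : Set S)) :
    ∃ e : S → ℝ, ∑ s ∈ T, e s • x s = 0 ∧ 0 ≤ ∑ s ∈ T, e s * c s ∧ ∃ s ∈ T, e s < 0 := by
  rw [linearIndepOn_iff''] at hdep
  push Not at hdep
  obtain ⟨t, g, htT, hg0, hgt, i, hit, hgi⟩ := hdep
  have hg : ∑ s ∈ T, g s • x s = 0 := by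
    rwa [← sum_subset (coe_subset.mp htT) fun s _ hs ↦ by simp [hg0 s hs]]
  have hiT : i ∈ T := htT hit
  rcases le_total 0 (∑ s ∈ T, g s * c s) with hc | hc
  · exact ⟨g, hg, hc, exists_neg_coeff_of_sum_smul_eq_zero f hpos hg ⟨i, hiT, hgi⟩⟩
  · have hg' : ∑ s ∈ T, (-g) s • x s = 0 := by simp [neg_smul, hg]
    refine ⟨-g, hg', by simpa using hc, ?_⟩
    exact exists_neg_coeff_of_sum_smul_eq_zero f hpos hg' ⟨i, hiT, by simpa using hgi⟩

lemma exists_step_to_zero_coeff {T : Finset S} {l e : S → ℝ} (hl : ∀ s ∈ T, 0 ≤ l s)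
    (hneg : ∃ s ∈ T, e s < 0) :
    ∃ t : ℝ, 0 ≤ t ∧ (∀ s ∈ T, 0 ≤ l s + t * e s) ∧ ∃ s₀ ∈ T, l s₀ + t * e s₀ = 0 := by
  classical
  have hN : (T.filter (e · < 0)).Nonempty := by
    obtain ⟨s, hs, h⟩ := hneg
    exact ⟨s, mem_filter.mpr ⟨hs, h⟩⟩
  obtain ⟨s₀, hs₀, hmin⟩ := (T.filter (e · < 0)).exists_mem_eq_inf' hN (fun s ↦ l s / -e s)
  obtain ⟨hs₀T, he₀⟩ := mem_filter.mp hs₀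
  have ht : 0 ≤ l s₀ / -e s₀ := div_nonneg (hl s₀ hs₀T) (neg_nonneg.mpr he₀.le)
  refine ⟨l s₀ / -e s₀, ht, fun s hs ↦ ?_, s₀, hs₀T, ?_⟩
  · rcases lt_or_ge (e s) 0 with hes | hes
    · have hle : l s₀ / -e s₀ ≤ l s / -e s := hmin ▸ inf'_le _ (mem_filter.mpr ⟨hs, hes⟩)
      have := (le_div_iff₀ (neg_pos.mpr hes)).mp hle
      linarith
    · exact add_nonneg (hl s hs) (mul_nonneg ht hes)
  · rw [div_neg, neg_mul, div_mul_cancel₀ _ he₀.ne, add_neg_cancel]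

theorem exists_sparse_nonneg_combination [FiniteDimensional ℝ E] (f : E →ₗ[ℝ] ℝ) (x : S → E)
    (c : S → ℝ) (T : Finset S) (hpos : ∀ s ∈ T, 0 < f (x s)) (l : S → ℝ)
    (hl : ∀ s ∈ T, 0 ≤ l s) :
    ∃ T' ⊆ T, T'.card ≤ finrank ℝ E ∧ ∃ l' : S → ℝ, (∀ s ∈ T', 0 ≤ l' s) ∧
      ∑ s ∈ T', l' s • x s = ∑ s ∈ T, l s • x s ∧
      ∑ s ∈ T, l s * c s ≤ ∑ s ∈ T', l' s * c s := by
  classical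
  induction T using Finset.strongInduction generalizing l with
  | H T ih =>
  by_cases hind : LinearIndepOn ℝ x (T : Set S)
  · exact ⟨T, subset_rfl, by simpa using hind.fintype_card_le_finrank, l, hl, rfl, le_rfl⟩
  obtain ⟨e, hex, hec, hneg⟩ := exists_relation_of_not_linearIndepOn f hpos c hind
  obtain ⟨t, ht, hl₂, s₀, hs₀, hzero⟩ := exists_step_to_zero_coeff hl hneg
  have hx₂ : ∑ s ∈ T.erase s₀, (l s + t * e s) • x s = ∑ s ∈ T, l s • x s := by
    rw [sum_erase _ (by simp [hzero])]
    simp [add_smul, sum_add_distrib, mul_smul, ← smul_sum, hex]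
  have hc₂ : ∑ s ∈ T, l s * c s ≤ ∑ s ∈ T.erase s₀, (l s + t * e s) * c s := by
    rw [sum_erase _ (by simp [hzero])]
    simp only [add_mul, sum_add_distrib, mul_assoc, ← mul_sum]
    linarith [mul_nonneg ht hec]
  obtain ⟨T', hT', hcard, l', hl', hx', hc'⟩ := ih (T.erase s₀) (erase_ssubset hs₀)
    (fun s hs ↦ hpos s (mem_of_mem_erase hs)) _ (fun s hs ↦ hl₂ s (mem_of_mem_erase hs))
  exact ⟨T', hT'.trans (erase_subset _ _), hcard, l', hl', hx'.trans hx₂, hc₂.trans hc'⟩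

end Reduction

section Reweighting

variable {Ω S : Type*} {μ : Ω → ℝ} {σ : Ω → S → ℝ} {w : S → ℝ}

def reweight (w : S → ℝ) (σ : Ω → S → ℝ) : Ω → S → ℝ := fun ω s ↦ w s * σ ω s

lemma isPolicy_reweight [Fintype S] (hμ : ∀ ω, 0 < μ ω) (hσ : ∀ ω s, 0 ≤ σ ω s)
    (hw : ∀ s, 0 ≤ w s) (hmass : ∀ ω, ∑ s, w s * (μ ω * σ ω s) = μ ω) :
    IsPolicy (reweight w σ) := by
  refine fun ω ↦ ⟨fun s ↦ mul_nonneg (hw s) (hσ ω s), mul_left_cancel₀ (hμ ω).ne' ?_⟩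
  calc μ ω * ∑ s, reweight w σ ω s = ∑ s, w s * (μ ω * σ ω s) := by
        simp only [reweight, mul_sum]
        exact sum_congr rfl fun _ _ ↦ by ring
    _ = μ ω * 1 := by rw [hmass, mul_one]

lemma ncard_support_reweight_le {T : Finset S} (hw : ∀ s ∉ T, w s = 0) :
    {s | ∃ ω, 0 < reweight w σ ω s}.ncard ≤ T.card := by
  have hsupp : {s | ∃ ω, 0 < reweight w σ ω s} ⊆ T := fun s ⟨ω, hω⟩ ↦
    by_contra fun hs ↦ hω.ne' (by simp [reweight, hw s hs])
  exact (Set.ncard_le_ncard hsupp T.finite_toSet).trans (Set.ncard_coe_finset T).le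

variable [Fintype Ω]

lemma sigPr_reweight (s : S) : sigPr μ (reweight w σ) s = w s * sigPr μ σ s := by
  simp only [sigPr, reweight, mul_sum]
  exact sum_congr rfl fun _ _ ↦ by ring

lemma post_reweight {s : S} (hw : w s ≠ 0) : post μ (reweight w σ) s = post μ σ s := by
  funext ω
  rw [post, post, sigPr_reweight, reweight, mul_left_comm, mul_div_mul_left _ _ hw]

lemma reweight_forall_post {P : S → (Ω → ℝ) → Prop} (hw : ∀ s, 0 ≤ w s)
    (h : ∀ s, 0 < sigPr μ σ s → P s (post μ σ s)) :
    ∀ s, 0 < sigPr μ (reweight w σ) s → P s (post μ (reweight w σ) s) := by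
  intro s hs
  rw [sigPr_reweight] at hs
  rw [post_reweight (left_ne_zero_of_mul hs.ne')]
  exact h s (pos_of_mul_pos_right hs (hw s))

lemma mul_eq_zero_of_sigPr_nonpos {s : S} (hμ : ∀ ω, 0 ≤ μ ω) (hσ : ∀ ω, 0 ≤ σ ω s)
    (h : sigPr μ σ s ≤ 0) (ω : Ω) : μ ω * σ ω s = 0 :=
  (sum_eq_zero_iff_of_nonneg fun ω _ ↦ mul_nonneg (hμ ω) (hσ ω)).mp
    (le_antisymm h (sum_nonneg fun ω _ ↦ mul_nonneg (hμ ω) (hσ ω))) ω (mem_univ ω)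

lemma polU_eq_sum [Fintype S] (util : S → Ω → ℝ) :
    polU μ σ util = ∑ s, ∑ ω, μ ω * σ ω s * util s ω := by
  simp only [polU, mul_sum, mul_assoc]
  exact sum_comm

lemma polU_reweight [Fintype S] (util : S → Ω → ℝ) :
    polU μ (reweight w σ) util = ∑ s, w s * ∑ ω, μ ω * σ ω s * util s ω := by
  simp only [polU_eq_sum, reweight, mul_sum]
  exact sum_congr rfl fun _ _ ↦ sum_congr rfl fun _ _ ↦ by ring

theorem exists_sparse_reweight [Fintype S] (hμ : ∀ ω, 0 < μ ω) (hσ : IsPolicy σ)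
    (util : S → Ω → ℝ) :
    ∃ w : S → ℝ, (∀ s, 0 ≤ w s) ∧ IsPolicy (reweight w σ) ∧
      {s | ∃ ω, 0 < reweight w σ ω s}.ncard ≤ Fintype.card Ω ∧
      polU μ σ util ≤ polU μ (reweight w σ) util := by
  classical
  -- Columns of zero mass are left out: the reduction needs every column to have positive mass.
  let T := univ.filter (fun s ↦ 0 < sigPr μ σ s)
  let x : S → Ω → ℝ := fun s ω ↦ μ ω * σ ω s
  let c : S → ℝ := fun s ↦ ∑ ω, μ ω * σ ω s * util s ω
  have hx : ∀ s, ¬ 0 < sigPr μ σ s → x s = 0 := fun s hs ↦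
    funext (mul_eq_zero_of_sigPr_nonpos (fun ω ↦ (hμ ω).le) (fun ω ↦ (hσ ω).1 s) (not_lt.mp hs))
  have hpos : ∀ s ∈ T, 0 < (∑ ω, LinearMap.proj ω : (Ω → ℝ) →ₗ[ℝ] ℝ) (x s) := by
    intro s hs
    simpa [x, sigPr] using (mem_filter.mp hs).2
  have hTx : ∑ s ∈ T, (1 : S → ℝ) s • x s = μ := by
    simp only [Pi.one_apply, one_smul]
    rw [sum_filter_of_ne fun s _ h ↦ by_contra fun hs ↦ h (hx s hs)]
    funext ω
    simp [x, ← mul_sum, (hσ ω).2]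
  have hTc : ∑ s ∈ T, (1 : S → ℝ) s * c s = polU μ σ util := by
    simp only [Pi.one_apply, one_mul, polU_eq_sum]
    refine sum_filter_of_ne fun s _ h ↦ by_contra fun hs ↦ h ?_
    simp [c, show ∀ ω, μ ω * σ ω s = 0 from congrFun (hx s hs)]
  obtain ⟨T', -, hcard, l, hl, hlx, hlc⟩ :=
    exists_sparse_nonneg_combination _ x c T hpos 1 (fun _ _ ↦ zero_le_one)
  let w : S → ℝ := fun s ↦ if s ∈ T' then l s else 0
  have hw : ∀ s, 0 ≤ w s := fun s ↦ by
    by_cases h : s ∈ T' <;> simp [w, h, hl]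
  have hsum_w : ∀ g : S → ℝ, ∑ s, w s * g s = ∑ s ∈ T', l s * g s := fun g ↦ by
    simp [w, ite_mul, sum_ite_mem]
  refine ⟨w, hw, isPolicy_reweight hμ (fun ω ↦ (hσ ω).1) hw fun ω ↦ ?_, ?_, ?_⟩
  · simpa [hsum_w, x] using congrFun (hlx.trans hTx) ω
  · refine (ncard_support_reweight_le (T := T') fun s hs ↦ if_neg hs).trans ?_
    rwa [finrank_fintype_fun_eq_card] at hcard
  · rw [polU_reweight, hsum_w, ← hTc]
    exact hlc

end Reweighting

theorem support_size_le_card_worlds_general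
    {Ω A B : Type} [Fintype Ω] [Fintype A] [Fintype B]
    [DecidableEq A] [DecidableEq B]
    (μ : Ω → ℝ) (hμpos : ∀ ω, 0 < μ ω)
    (vA : A → B → Ω → ℝ) (vB : B → A → Ω → ℝ) (u : A → B → Ω → ℝ)
    (σ : Ω → (Pref A B × (A ≃ B)) → ℝ)
    (hpol : IsPolicy σ)
    (hstab : ∀ s, 0 < sigPr μ σ s → StableAt vA vB s.2 (post μ σ s))
    (hind : Indicative μ vA vB σ) :
    ∃ σ' : Ω → (Pref A B × (A ≃ B)) → ℝ,
      IsPolicy σ' ∧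
      (∀ s, 0 < sigPr μ σ' s → StableAt vA vB s.2 (post μ σ' s)) ∧
      Indicative μ vA vB σ' ∧
      Set.ncard {s : Pref A B × (A ≃ B) | ∃ ω, 0 < σ' ω s} ≤ Fintype.card Ω ∧
      polU μ σ (fun s ω => uMatch u s.2 ω) ≤ polU μ σ' (fun s ω => uMatch u s.2 ω) := by
  obtain ⟨w, hw, hpol', hcard, hu⟩ := exists_sparse_reweight hμpos hpol fun s ω ↦ uMatch u s.2 ω
  exact ⟨reweight w σ, hpol', reweight_forall_post hw hstab,
    reweight_forall_post (P := fun (s : Pref A B × (A ≃ B)) p ↦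
      ValidProfile s.1 ∧ InCell vA vB s.1 p) hw hind, hcard, hu⟩

/-- **Support size bounded by the number of worlds** (Lemma 9): every stable
indicative policy can be replaced by a stable indicative policy supported on
at most `|Ω|` meta-signals, with at least the same expected utility. -/
theorem support_size_le_card_worlds
    {Ω A B : Type} [Fintype Ω] [Nonempty Ω] [Fintype A] [Fintype B]
    [DecidableEq A] [DecidableEq B]
    (μ : Ω → ℝ) (hμ : IsDist μ) (hμpos : ∀ ω, 0 < μ ω)
    (vA : A → B → Ω → ℝ) (vB : B → A → Ω → ℝ) (u : A → B → Ω → ℝ)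
    (σ : Ω → (Pref A B × (A ≃ B)) → ℝ)
    (hpol : IsPolicy σ)
    (hstab : ∀ s, 0 < sigPr μ σ s → StableAt vA vB s.2 (post μ σ s))
    (hind : Indicative μ vA vB σ) :
    ∃ σ' : Ω → (Pref A B × (A ≃ B)) → ℝ,
      IsPolicy σ' ∧
      (∀ s, 0 < sigPr μ σ' s → StableAt vA vB s.2 (post μ σ' s)) ∧
      Indicative μ vA vB σ' ∧
      Set.ncard {s : Pref A B × (A ≃ B) | ∃ ω, 0 < σ' ω s} ≤ Fintype.card Ω ∧
      polU μ σ (fun s ω => uMatch u s.2 ω) ≤ polU μ σ' (fun s ω => uMatch u s.2 ω) :=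
  support_size_le_card_worlds_general μ hμpos vA vB u σ hpol hstab hind

end MP
end

section
/- Private persuasion needs only subtype-level signals and useful matchings (Theorem 11): In the type-based model, for every stable private policy σ : Ω → Δ(G^{A∪B} × 𝓜) with finite signal set G, there exists a stable indicative private policy σ' : Ω → Δ(𝓛 × 𝓜) with u(σ') ≥ u(σ) such that (i) every matching appearing with positive probability under σ' realizes some matrix in V*, and (ii) for every meta-signal (⪯, M) in the support of σ' and any two agents x, x' that have the same subtype in M, the components satisfy ⪯_x = ⪯_{x'}. Here the subtype of agent x in M is the pair (class of x, class of M(x)); V* is the union over all P ⊆ [T]×[T] of the sets of extreme points of the polytope of matrices x ∈ ℝ^{T×T} with row sums |A_s|, column sums |B_t|, x ≥ 0, and x(s,t) = 0 for (s,t) ∉ P; and a matching M realizes a matrix x if |M ∩ (A_s × B_t)| = x(s,t) for all (s,t). -/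
open Finset

namespace MP

/-- The polytope of `T × T` matrices with row sums `|A_s|`, column sums `|B_t|`,
nonnegative entries, and support contained in the prototype `P`. -/
def protoPolytope {A B : Type*} [Fintype A] [Fintype B] {T : ℕ}
    (tA : A → Fin T) (tB : B → Fin T) (P : Set (Fin T × Fin T)) :
    Set (Fin T → Fin T → ℝ) :=
  {x | (∀ s, ∑ t, x s t = ((univ.filter fun a => tA a = s).card : ℝ)) ∧
       (∀ t, ∑ s, x s t = ((univ.filter fun b => tB b = t).card : ℝ)) ∧
       (∀ s t, 0 ≤ x s t) ∧
       (∀ s t, (s, t) ∉ P → x s t = 0)}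

/-- `V*`: the union over all prototypes `P` of the extreme points of the
corresponding polytopes. -/
def Vstar {A B : Type*} [Fintype A] [Fintype B] {T : ℕ}
    (tA : A → Fin T) (tB : B → Fin T) : Set (Fin T → Fin T → ℝ) :=
  ⋃ P : Set (Fin T × Fin T), Set.extremePoints ℝ (protoPolytope tA tB P)

/-- A matching `M` realizes the matrix `x` if the number of matched pairs with
classes `(s,t)` equals `x s t` for all `(s,t)`. -/
def RealizesMatrix {A B : Type*} [Fintype A] [Fintype B] {T : ℕ}
    (tA : A → Fin T) (tB : B → Fin T) (M : A ≃ B) (x : Fin T → Fin T → ℝ) : Prop :=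
  ∀ s t, ((univ.filter fun a => tA a = s ∧ tB (M a) = t).card : ℝ) = x s t

/-! ### Private persuasion -/

/-- Joint (unnormalized) weight of world `ω` and agent `a` observing private
signal `gA` together with matching `M`, under a private policy `σ`. -/
noncomputable def margA {Ω A B G : Type*} [Fintype A] [Fintype B] [Fintype G]
    [DecidableEq A] [DecidableEq B] [DecidableEq G]
    (μ : Ω → ℝ) (σ : Ω → (((A ⊕ B) → G) × (A ≃ B)) → ℝ)
    (a : A) (gA : G) (M : A ≃ B) (ω : Ω) : ℝ :=
  μ ω * ∑ g : (A ⊕ B) → G, if g (Sum.inl a) = gA then σ ω (g, M) else 0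

/-- Joint (unnormalized) weight for a `B`-side agent. -/
noncomputable def margB {Ω A B G : Type*} [Fintype A] [Fintype B] [Fintype G]
    [DecidableEq A] [DecidableEq B] [DecidableEq G]
    (μ : Ω → ℝ) (σ : Ω → (((A ⊕ B) → G) × (A ≃ B)) → ℝ)
    (b : B) (gB : G) (M : A ≃ B) (ω : Ω) : ℝ :=
  μ ω * ∑ g : (A ⊕ B) → G, if g (Sum.inr b) = gB then σ ω (g, M) else 0

/-- Posterior belief of agent `a ∈ A` upon observing `(gA, M)`. -/
noncomputable def postPrivA {Ω A B G : Type*} [Fintype Ω] [Fintype A] [Fintype B] [Fintype G]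
    [DecidableEq A] [DecidableEq B] [DecidableEq G]
    (μ : Ω → ℝ) (σ : Ω → (((A ⊕ B) → G) × (A ≃ B)) → ℝ)
    (a : A) (gA : G) (M : A ≃ B) : Ω → ℝ :=
  fun ω => margA μ σ a gA M ω / ∑ ω', margA μ σ a gA M ω'

/-- Posterior belief of agent `b ∈ B` upon observing `(gB, M)`. -/
noncomputable def postPrivB {Ω A B G : Type*} [Fintype Ω] [Fintype A] [Fintype B] [Fintype G]
    [DecidableEq A] [DecidableEq B] [DecidableEq G]
    (μ : Ω → ℝ) (σ : Ω → (((A ⊕ B) → G) × (A ≃ B)) → ℝ)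
    (b : B) (gB : G) (M : A ≃ B) : Ω → ℝ :=
  fun ω => margB μ σ b gB M ω / ∑ ω', margB μ σ b gB M ω'

/-- Stability of a private policy: for every positive-probability meta-signal
and every pair `(a,b)`, some side weakly prefers its partner under its own
posterior. -/
def StablePrivate {Ω A B G : Type*} [Fintype Ω] [Fintype A] [Fintype B] [Fintype G]
    [DecidableEq A] [DecidableEq B] [DecidableEq G]
    (μ : Ω → ℝ) (vA : A → B → Ω → ℝ) (vB : B → A → Ω → ℝ)
    (σ : Ω → (((A ⊕ B) → G) × (A ≃ B)) → ℝ) : Prop :=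
  ∀ s : ((A ⊕ B) → G) × (A ≃ B), 0 < sigPr μ σ s →
    ∀ a b,
      eVal (vA a (s.2 a)) (postPrivA μ σ a (s.1 (Sum.inl a)) s.2) ≥
        eVal (vA a b) (postPrivA μ σ a (s.1 (Sum.inl a)) s.2) ∨
      eVal (vB b (s.2.symm b)) (postPrivB μ σ b (s.1 (Sum.inr b)) s.2) ≥
        eVal (vB b a) (postPrivB μ σ b (s.1 (Sum.inr b)) s.2)

/-! ### Private policies whose signals are preference profiles:
agent `a` observes `(⪯_a, M)`, i.e. the component `L.1 a` of the profile. -/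

/-- Joint weight of world `ω` and agent `a` observing preference `r` and
matching `M`. -/
noncomputable def pmargA {Ω A B : Type*} [Fintype A] [Fintype B]
    [DecidableEq A] [DecidableEq B]
    (μ : Ω → ℝ) (σ : Ω → (Pref A B × (A ≃ B)) → ℝ)
    (a : A) (r : B → B → Bool) (M : A ≃ B) (ω : Ω) : ℝ :=
  μ ω * ∑ L : Pref A B, if L.1 a = r then σ ω (L, M) else 0

/-- Joint weight for a `B`-side agent. -/
noncomputable def pmargB {Ω A B : Type*} [Fintype A] [Fintype B]
    [DecidableEq A] [DecidableEq B]
    (μ : Ω → ℝ) (σ : Ω → (Pref A B × (A ≃ B)) → ℝ)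
    (b : B) (r : A → A → Bool) (M : A ≃ B) (ω : Ω) : ℝ :=
  μ ω * ∑ L : Pref A B, if L.2 b = r then σ ω (L, M) else 0

/-- Posterior of agent `a` upon privately observing `(r, M)`. -/
noncomputable def ppostA {Ω A B : Type*} [Fintype Ω] [Fintype A] [Fintype B]
    [DecidableEq A] [DecidableEq B]
    (μ : Ω → ℝ) (σ : Ω → (Pref A B × (A ≃ B)) → ℝ)
    (a : A) (r : B → B → Bool) (M : A ≃ B) : Ω → ℝ :=
  fun ω => pmargA μ σ a r M ω / ∑ ω', pmargA μ σ a r M ω'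

/-- Posterior of agent `b` upon privately observing `(r, M)`. -/
noncomputable def ppostB {Ω A B : Type*} [Fintype Ω] [Fintype A] [Fintype B]
    [DecidableEq A] [DecidableEq B]
    (μ : Ω → ℝ) (σ : Ω → (Pref A B × (A ≃ B)) → ℝ)
    (b : B) (r : A → A → Bool) (M : A ≃ B) : Ω → ℝ :=
  fun ω => pmargB μ σ b r M ω / ∑ ω', pmargB μ σ b r M ω'

/-- Stability of a profile-signal private policy. -/
def StablePrivateProf {Ω A B : Type*} [Fintype Ω] [Fintype A] [Fintype B]
    [DecidableEq A] [DecidableEq B]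
    (μ : Ω → ℝ) (vA : A → B → Ω → ℝ) (vB : B → A → Ω → ℝ)
    (σ : Ω → (Pref A B × (A ≃ B)) → ℝ) : Prop :=
  ∀ s : Pref A B × (A ≃ B), 0 < sigPr μ σ s →
    ∀ a b,
      eVal (vA a (s.2 a)) (ppostA μ σ a (s.1.1 a) s.2) ≥
        eVal (vA a b) (ppostA μ σ a (s.1.1 a) s.2) ∨
      eVal (vB b (s.2.symm b)) (ppostB μ σ b (s.1.2 b) s.2) ≥
        eVal (vB b a) (ppostB μ σ b (s.1.2 b) s.2)

/-- Indicativeness of a profile-signal private policy: each agent's private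
posterior lies in the agent-level cell of the preference it was signaled. -/
def IndicativePrivate {Ω A B : Type*} [Fintype Ω] [Fintype A] [Fintype B]
    [DecidableEq A] [DecidableEq B]
    (μ : Ω → ℝ) (vA : A → B → Ω → ℝ) (vB : B → A → Ω → ℝ)
    (σ : Ω → (Pref A B × (A ≃ B)) → ℝ) : Prop :=
  ∀ s : Pref A B × (A ≃ B), 0 < sigPr μ σ s →
    ValidProfile s.1 ∧
    (∀ a y y', s.1.1 a y y' = true →
      eVal (vA a y) (ppostA μ σ a (s.1.1 a) s.2) ≤
        eVal (vA a y') (ppostA μ σ a (s.1.1 a) s.2)) ∧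
    (∀ b x x', s.1.2 b x x' = true →
      eVal (vB b x) (ppostB μ σ b (s.1.2 b) s.2) ≤
        eVal (vB b x') (ppostB μ σ b (s.1.2 b) s.2))

lemma exists_unit_dir {T : ℕ} (d : Fin T → Fin T → ℝ)
    (hrow : ∀ s, ∑ t, d s t = 0) (hcol : ∀ t, ∑ s, d s t = 0) (hne : d ≠ 0) :
    ∃ e : Fin T → Fin T → ℝ, (∀ s t, e s t = -1 ∨ e s t = 0 ∨ e s t = 1) ∧ e ≠ 0 ∧
      (∀ s, ∑ t, e s t = 0) ∧ (∀ t, ∑ s, e s t = 0) ∧ (∀ s t, e s t ≠ 0 → d s t ≠ 0) := by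
  classical
  have hex : ∃ p : Fin T × Fin T, d p.1 p.2 ≠ 0 := by
    by_contra h
    push_neg at h
    exact hne (funext fun s => funext fun t => h (s, t))
  obtain ⟨p0, h0⟩ := hex
  have hstep : ∀ p : Fin T × Fin T, d p.1 p.2 ≠ 0 →
      ∃ q : Fin T × Fin T, d q.1 q.2 ≠ 0 ∧ d q.1 p.2 ≠ 0 ∧ q.1 ≠ p.1 ∧ q.2 ≠ p.2 := by
    rintro ⟨s, t⟩ hd
    have hs' : ∃ s', s' ≠ s ∧ d s' t ≠ 0 := by
      by_contra h
      push_neg at h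
      have : ∑ s', d s' t = d s t :=
        Finset.sum_eq_single_of_mem s (mem_univ s) (fun b _ hb => h b hb)
      rw [hcol t] at this
      exact hd this.symm
    obtain ⟨s', hs's, hds'⟩ := hs'
    have ht' : ∃ t', t' ≠ t ∧ d s' t' ≠ 0 := by
      by_contra h
      push_neg at h
      have : ∑ t', d s' t' = d s' t :=
        Finset.sum_eq_single_of_mem t (mem_univ t) (fun b _ hb => h b hb)
      rw [hrow s'] at this
      exact hds' this.symm
    obtain ⟨t', htt, hdt⟩ := ht'
    exact ⟨(s', t'), hdt, hds', hs's, htt⟩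
  choose stepf h1 h2 h3 h4 using hstep
  let F : ℕ → {p : Fin T × Fin T // d p.1 p.2 ≠ 0} := fun n =>
    Nat.rec ⟨p0, h0⟩ (fun _ q => ⟨stepf q.1 q.2, h1 q.1 q.2⟩) n
  let S : ℕ → Fin T := fun n => (F n).1.1
  let Tt : ℕ → Fin T := fun n => (F n).1.2
  have hd1 : ∀ n, d (S n) (Tt n) ≠ 0 := fun n => (F n).2
  have hd2 : ∀ n, d (S (n + 1)) (Tt n) ≠ 0 := fun n => h2 (F n).1 (F n).2
  have hSne : ∀ n, S (n + 1) ≠ S n := fun n => h3 (F n).1 (F n).2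
  have hTne : ∀ n, Tt (n + 1) ≠ Tt n := fun n => h4 (F n).1 (F n).2
  -- pigeonhole
  have hQex : ∃ j, ∃ i, i < j ∧ S i = S j := by
    obtain ⟨x, y, hxy, hmap⟩ := Fintype.exists_ne_map_eq_of_card_lt
      (fun i : Fin (T + 1) => S i.1) (by simp)
    rcases lt_or_gt_of_ne hxy with h | h
    · exact ⟨y.1, x.1, h, hmap⟩
    · exact ⟨x.1, y.1, h, hmap.symm⟩
  let j := Nat.find hQex
  obtain ⟨i₀, hi₀j, hS0⟩ : ∃ i, i < j ∧ S i = S j := Nat.find_spec hQex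
  have hinj : ∀ k l, k < j → l < j → S k = S l → k = l := by
    intro k l hk hl hkl
    by_contra hne'
    rcases lt_or_gt_of_ne hne' with h | h
    · exact Nat.find_min hQex hl ⟨k, h, hkl⟩
    · exact Nat.find_min hQex hk ⟨l, h, hkl.symm⟩
  have hj2 : i₀ + 1 < j := by
    rcases lt_or_eq_of_le (Nat.succ_le_of_lt hi₀j) with h | h
    · exact h
    · exfalso
      have hj' : i₀ + 1 = j := h
      exact hSne i₀ (by rw [hj']; exact hS0.symm)
  set e : Fin T → Fin T → ℝ := fun s t => ∑ i ∈ Finset.Ico i₀ j,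
    ((if S i = s ∧ Tt i = t then (1 : ℝ) else 0) -
     (if S (i + 1) = s ∧ Tt i = t then (1 : ℝ) else 0)) with he
  -- support
  have hsupp : ∀ s t, e s t ≠ 0 → d s t ≠ 0 := by
    intro s t hest
    intro hdst
    apply hest
    simp only [he]
    apply Finset.sum_eq_zero
    intro i _
    have h1' : ¬(S i = s ∧ Tt i = t) := by
      rintro ⟨rfl, rfl⟩; exact hd1 i hdst
    have h2' : ¬(S (i + 1) = s ∧ Tt i = t) := by
      rintro ⟨rfl, rfl⟩; exact hd2 i hdst
    rw [if_neg h1', if_neg h2', sub_zero]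
  -- row sums
  have hrowe : ∀ s, ∑ t, e s t = 0 := by
    intro s
    rw [he]
    rw [Finset.sum_comm]
    have : ∀ i ∈ Finset.Ico i₀ j,
        (∑ t, ((if S i = s ∧ Tt i = t then (1 : ℝ) else 0) -
          (if S (i + 1) = s ∧ Tt i = t then (1 : ℝ) else 0)))
        = (if S i = s then (1 : ℝ) else 0) - (if S (i + 1) = s then (1 : ℝ) else 0) := by
      intro i _
      rw [Finset.sum_sub_distrib]
      congr 1
      · split_ifs with h
        · simp [h]
        · apply Finset.sum_eq_zero; intro t _
          rw [if_neg (fun hc => h hc.1)]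
      · split_ifs with h
        · simp [h]
        · apply Finset.sum_eq_zero; intro t _
          rw [if_neg (fun hc => h hc.1)]
    rw [Finset.sum_congr rfl this]
    rw [Finset.sum_Ico_eq_sum_range]
    have := Finset.sum_range_sub' (fun k => if S (i₀ + k) = s then (1 : ℝ) else 0) (j - i₀)
    simp only [← Nat.add_assoc] at this ⊢
    rw [this]
    have hji : i₀ + (j - i₀) = j := Nat.add_sub_cancel' (le_of_lt hi₀j)
    rw [hji, Nat.add_zero, hS0]
    ring
  -- col sums
  have hcole : ∀ t, ∑ s, e s t = 0 := by
    intro t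
    rw [he, Finset.sum_comm]
    apply Finset.sum_eq_zero
    intro i _
    rw [Finset.sum_sub_distrib]
    have hA : (∑ s, (if S i = s ∧ Tt i = t then (1 : ℝ) else 0)) = if Tt i = t then 1 else 0 := by
      split_ifs with h
      · simp [h, eq_comm]
      · apply Finset.sum_eq_zero; intro s _
        rw [if_neg (fun hc => h hc.2)]
    have hB : (∑ s, (if S (i + 1) = s ∧ Tt i = t then (1 : ℝ) else 0)) = if Tt i = t then 1 else 0 := by
      split_ifs with h
      · simp [h, eq_comm]
      · apply Finset.sum_eq_zero; intro s _
        rw [if_neg (fun hc => h hc.2)]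
    rw [hA, hB, sub_self]
  -- entries
  have hcard : ∀ s t, e s t =
      (((Finset.Ico i₀ j).filter fun i => S i = s ∧ Tt i = t).card : ℝ) -
      (((Finset.Ico i₀ j).filter fun i => S (i + 1) = s ∧ Tt i = t).card : ℝ) := by
    intro s t
    simp only [he]
    rw [Finset.sum_sub_distrib, Finset.sum_boole, Finset.sum_boole]
  have hPos1 : ∀ s t, (((Finset.Ico i₀ j).filter fun i => S i = s ∧ Tt i = t).card) ≤ 1 := by
    intro s t
    rw [Finset.card_le_one]
    intro a ha b hb
    simp only [Finset.mem_filter, Finset.mem_Ico] at ha hb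
    exact hinj a b ha.1.2 hb.1.2 (ha.2.1.trans hb.2.1.symm)
  have hNeg1 : ∀ s t, (((Finset.Ico i₀ j).filter fun i => S (i + 1) = s ∧ Tt i = t).card) ≤ 1 := by
    intro s t
    rw [Finset.card_le_one]
    intro a ha b hb
    simp only [Finset.mem_filter, Finset.mem_Ico] at ha hb
    have hab : S (a + 1) = S (b + 1) := ha.2.1.trans hb.2.1.symm
    have key : ∀ k l : ℕ, k ∈ Finset.Ico i₀ j → l ∈ Finset.Ico i₀ j → S (k+1) = S (l+1) → k + 1 = l + 1 := by
      intro k l hk hl hkl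
      simp only [Finset.mem_Ico] at hk hl
      rcases lt_or_eq_of_le (Nat.succ_le_of_lt hk.2) with hk' | hk'
      · rcases lt_or_eq_of_le (Nat.succ_le_of_lt hl.2) with hl' | hl'
        · exact hinj _ _ hk' hl' hkl
        · have hlj : l + 1 = j := hl'
          have hx : S (k + 1) = S i₀ := by rw [hkl, hlj]; exact hS0.symm
          have := hinj _ _ hk' hi₀j hx
          omega
      · rcases lt_or_eq_of_le (Nat.succ_le_of_lt hl.2) with hl' | hl'
        · have hkj : k + 1 = j := hk'
          have hx : S (l + 1) = S i₀ := by rw [← hkl, hkj]; exact hS0.symm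
          have := hinj _ _ hl' hi₀j hx
          omega
        · omega
    have := key a b (Finset.mem_Ico.2 ha.1) (Finset.mem_Ico.2 hb.1) hab
    omega
  have hentries : ∀ s t, e s t = -1 ∨ e s t = 0 ∨ e s t = 1 := by
    intro s t
    rw [hcard s t]
    have h1' := hPos1 s t
    have h2' := hNeg1 s t
    interval_cases h : (((Finset.Ico i₀ j).filter fun i => S i = s ∧ Tt i = t).card) <;>
      interval_cases h' : (((Finset.Ico i₀ j).filter fun i => S (i + 1) = s ∧ Tt i = t).card) <;>
      norm_num
  -- nonzero
  have hne' : e (S (i₀ + 1)) (Tt i₀) = -1 := by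
    rw [hcard]
    have hPosEmpty : ((Finset.Ico i₀ j).filter fun i => S i = S (i₀ + 1) ∧ Tt i = Tt i₀) = ∅ := by
      apply Finset.filter_eq_empty_iff.2
      intro i hi
      rintro ⟨hSi, hTi⟩
      simp only [Finset.mem_Ico] at hi
      have : i = i₀ + 1 := hinj i (i₀ + 1) hi.2 hj2 hSi
      subst this
      exact hTne i₀ hTi
    have hNegMem : i₀ ∈ (Finset.Ico i₀ j).filter fun i => S (i + 1) = S (i₀ + 1) ∧ Tt i = Tt i₀ :=
      Finset.mem_filter.2 ⟨Finset.mem_Ico.2 ⟨le_refl _, hi₀j⟩, rfl, rfl⟩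
    have h2' := hNeg1 (S (i₀ + 1)) (Tt i₀)
    have hge : 1 ≤ ((Finset.Ico i₀ j).filter fun i => S (i + 1) = S (i₀ + 1) ∧ Tt i = Tt i₀).card :=
      Finset.card_pos.2 ⟨i₀, hNegMem⟩
    have : ((Finset.Ico i₀ j).filter fun i => S (i + 1) = S (i₀ + 1) ∧ Tt i = Tt i₀).card = 1 := le_antisymm h2' hge
    rw [hPosEmpty, this]
    norm_num
  refine ⟨e, hentries, ?_, hrowe, hcole, hsupp⟩
  intro h
  rw [h] at hne'
  norm_num at hne'

lemma extreme_of_no_dir {A B : Type*} [Fintype A] [Fintype B] {T : ℕ}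
    (tA : A → Fin T) (tB : B → Fin T) (x : Fin T → Fin T → ℝ)
    (hNat : ∀ s t, ∃ n : ℕ, x s t = n)
    (hrow : ∀ s, ∑ t, x s t = ((univ.filter fun a => tA a = s).card : ℝ))
    (hcol : ∀ t, ∑ s, x s t = ((univ.filter fun b => tB b = t).card : ℝ))
    (hND : ¬ ∃ e : Fin T → Fin T → ℝ, (∀ s t, e s t = -1 ∨ e s t = 0 ∨ e s t = 1) ∧ e ≠ 0 ∧
      (∀ s, ∑ t, e s t = 0) ∧ (∀ t, ∑ s, e s t = 0) ∧ (∀ s t, e s t ≠ 0 → x s t ≠ 0)) :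
    x ∈ Set.extremePoints ℝ (protoPolytope tA tB {st | x st.1 st.2 ≠ 0}) := by
  rw [mem_extremePoints]
  have hmem : x ∈ protoPolytope tA tB {st | x st.1 st.2 ≠ 0} := by
    refine ⟨hrow, hcol, ?_, ?_⟩
    · intro s t
      obtain ⟨n, hn⟩ := hNat s t
      rw [hn]; exact Nat.cast_nonneg n
    · intro s t h
      exact not_not.mp h
  refine ⟨hmem, ?_⟩
  intro y hy z hz hseg
  by_cases hyz : y = z
  · subst hyz
    rw [openSegment_same] at hseg
    rw [Set.mem_singleton_iff] at hseg
    exact ⟨hseg.symm, hseg.symm⟩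
  · exfalso
    obtain ⟨hy1, hy2, _, hy4⟩ := hy
    obtain ⟨hz1, hz2, _, hz4⟩ := hz
    set d : Fin T → Fin T → ℝ := fun s t => y s t - z s t with hd
    have hdne : d ≠ 0 := by
      intro h
      apply hyz
      funext s t
      have := congrFun (congrFun h s) t
      simp only [hd, Pi.zero_apply] at this
      linarith
    have hdrow : ∀ s, ∑ t, d s t = 0 := by
      intro s
      simp only [hd]
      rw [Finset.sum_sub_distrib, hy1, hz1, sub_self]
    have hdcol : ∀ t, ∑ s, d s t = 0 := by
      intro t
      simp only [hd]
      rw [Finset.sum_sub_distrib, hy2, hz2, sub_self]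
    obtain ⟨e, hpm, hene, hre, hce, hse⟩ := exists_unit_dir d hdrow hdcol hdne
    apply hND
    refine ⟨e, hpm, hene, hre, hce, ?_⟩
    intro s t hest hx0
    have hP : (s, t) ∉ ({st : Fin T × Fin T | x st.1 st.2 ≠ 0} : Set _) := by
      simp only [Set.mem_setOf_eq, not_not]
      exact hx0
    have : d s t = 0 := by
      simp only [hd]
      rw [hy4 s t hP, hz4 s t hP, sub_self]
    exact hse s t hest this

lemma descent {A B : Type*} [Fintype A] [Fintype B] {T : ℕ}
    (tA : A → Fin T) (tB : B → Fin T) (w : Fin T → Fin T → ℝ) :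
    ∀ N (x : Fin T → Fin T → ℝ),
      (univ.filter fun st : Fin T × Fin T => x st.1 st.2 ≠ 0).card ≤ N →
      (∀ s t, ∃ n : ℕ, x s t = n) →
      (∀ s, ∑ t, x s t = ((univ.filter fun a => tA a = s).card : ℝ)) →
      (∀ t, ∑ s, x s t = ((univ.filter fun b => tB b = t).card : ℝ)) →
      ∃ x' : Fin T → Fin T → ℝ,
        (∀ s t, ∃ n : ℕ, x' s t = n) ∧
        (∀ s, ∑ t, x' s t = ((univ.filter fun a => tA a = s).card : ℝ)) ∧
        (∀ t, ∑ s, x' s t = ((univ.filter fun b => tB b = t).card : ℝ)) ∧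
        (∀ s t, x' s t ≠ 0 → x s t ≠ 0) ∧
        (∑ s, ∑ t, w s t * x s t ≤ ∑ s, ∑ t, w s t * x' s t) ∧
        x' ∈ Set.extremePoints ℝ (protoPolytope tA tB {st | x' st.1 st.2 ≠ 0}) := by
  classical
  intro N
  induction N with
  | zero =>
    intro x hcard hNat hrow hcol
    refine ⟨x, hNat, hrow, hcol, fun s t h => h, le_refl _, ?_⟩
    apply extreme_of_no_dir tA tB x hNat hrow hcol
    rintro ⟨e, hpm, hene, hre, hce, hse⟩
    apply hene
    funext s t
    by_contra hest
    have : (s, t) ∈ univ.filter fun st : Fin T × Fin T => x st.1 st.2 ≠ 0 :=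
      Finset.mem_filter.2 ⟨mem_univ _, hse s t hest⟩
    have := Finset.card_pos.2 ⟨(s, t), this⟩
    omega
  | succ N ih =>
    intro x hcard hNat hrow hcol
    by_cases hE : ∃ e : Fin T → Fin T → ℝ, (∀ s t, e s t = -1 ∨ e s t = 0 ∨ e s t = 1) ∧ e ≠ 0 ∧
      (∀ s, ∑ t, e s t = 0) ∧ (∀ t, ∑ s, e s t = 0) ∧ (∀ s t, e s t ≠ 0 → x s t ≠ 0)
    · -- improve: find a weakly-improving unit direction
      have hE' : ∃ e : Fin T → Fin T → ℝ, (∀ s t, e s t = -1 ∨ e s t = 0 ∨ e s t = 1) ∧ e ≠ 0 ∧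
          (∀ s, ∑ t, e s t = 0) ∧ (∀ t, ∑ s, e s t = 0) ∧ (∀ s t, e s t ≠ 0 → x s t ≠ 0) ∧
          0 ≤ ∑ s, ∑ t, w s t * e s t := by
        obtain ⟨e, hpm, hene, hre, hce, hse⟩ := hE
        by_cases hwe : 0 ≤ ∑ s, ∑ t, w s t * e s t
        · exact ⟨e, hpm, hene, hre, hce, hse, hwe⟩
        · refine ⟨fun s t => -(e s t), ?_, ?_, ?_, ?_, ?_, ?_⟩
          · intro s t
            show -(e s t) = -1 ∨ -(e s t) = 0 ∨ -(e s t) = 1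
            rcases hpm s t with h | h | h <;> rw [h] <;> norm_num
          · intro h
            apply hene
            funext s t
            have h2 : -(e s t) = 0 := congrFun (congrFun h s) t
            exact neg_eq_zero.mp h2
          · intro s
            show ∑ t, -(e s t) = 0
            rw [Finset.sum_neg_distrib, hre s, neg_zero]
          · intro t
            show ∑ s, -(e s t) = 0
            rw [Finset.sum_neg_distrib, hce t, neg_zero]
          · intro s t h
            apply hse s t
            intro h'
            apply h
            show -(e s t) = 0
            rw [h', neg_zero]
          · push_neg at hwe
            show 0 ≤ ∑ s, ∑ t, w s t * -(e s t)
            have heq : ∑ s, ∑ t, w s t * -(e s t) = -∑ s, ∑ t, w s t * e s t := by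
              rw [← Finset.sum_neg_distrib]
              refine Finset.sum_congr rfl fun s _ => ?_
              rw [← Finset.sum_neg_distrib]
              refine Finset.sum_congr rfl fun t _ => ?_
              ring
            rw [heq]
            linarith
      obtain ⟨e, hpm, hene, hre, hce, hse, hwe⟩ := hE'
      -- find a negative entry minimizing x
      have hNegne : (univ.filter fun st : Fin T × Fin T => e st.1 st.2 = -1).Nonempty := by
        have hex : ∃ s t, e s t ≠ 0 := by
          by_contra h
          push_neg at h
          exact hene (funext fun s => funext fun t => h s t)
        obtain ⟨s, t, hst⟩ := hex
        rcases hpm s t with h | h | h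
        · exact ⟨(s, t), Finset.mem_filter.2 ⟨mem_univ _, h⟩⟩
        · exact absurd h hst
        · -- row s has a negative entry
          have : ∃ t', e s t' < 0 := by
            by_contra hc
            push_neg at hc
            have h1 : (1 : ℝ) ≤ ∑ t', e s t' := by
              rw [← h]
              exact Finset.single_le_sum (fun t' _ => hc t') (mem_univ t)
            rw [hre s] at h1
            linarith
          obtain ⟨t', ht'⟩ := this
          rcases hpm s t' with h' | h' | h'
          · exact ⟨(s, t'), Finset.mem_filter.2 ⟨mem_univ _, h'⟩⟩
          · rw [h'] at ht'; linarith
          · rw [h'] at ht'; linarith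
      obtain ⟨st₀, hmem₀, hmin⟩ := Finset.exists_min_image _ (fun st => x st.1 st.2) hNegne
      obtain ⟨s₀, t₀⟩ := st₀
      have he₀ : e s₀ t₀ = -1 := (Finset.mem_filter.1 hmem₀).2
      have hx₀ne : x s₀ t₀ ≠ 0 := hse s₀ t₀ (by rw [he₀]; norm_num)
      obtain ⟨n₀, hn₀⟩ := hNat s₀ t₀
      have hn₀pos : 0 < (n₀ : ℝ) := by
        rcases Nat.eq_zero_or_pos n₀ with h | h
        · exfalso; apply hx₀ne; rw [hn₀, h]; norm_num
        · exact_mod_cast h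
      set x₁ : Fin T → Fin T → ℝ := fun s t => x s t + x s₀ t₀ * e s t with hx₁
      have hx₁Nat : ∀ s t, ∃ n : ℕ, x₁ s t = n := by
        intro s t
        obtain ⟨n, hn⟩ := hNat s t
        rcases hpm s t with h | h | h
        · -- e = -1 : from minimality, n₀ ≤ n
          have hmem' : (s, t) ∈ univ.filter fun st : Fin T × Fin T => e st.1 st.2 = -1 :=
            Finset.mem_filter.2 ⟨mem_univ _, h⟩
          have hle : x s₀ t₀ ≤ x s t := hmin (s, t) hmem'
          have hlen : n₀ ≤ n := by
            rw [hn₀, hn] at hle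
            exact_mod_cast hle
          refine ⟨n - n₀, ?_⟩
          simp only [hx₁]
          rw [hn, hn₀, h, Nat.cast_sub hlen]
          ring
        · exact ⟨n, by simp only [hx₁]; rw [hn, h]; ring⟩
        · refine ⟨n + n₀, ?_⟩
          simp only [hx₁]
          rw [hn, hn₀, h, Nat.cast_add]
          ring
      have hx₁row : ∀ s, ∑ t, x₁ s t = ((univ.filter fun a => tA a = s).card : ℝ) := by
        intro s
        simp only [hx₁]
        rw [Finset.sum_add_distrib, hrow s, ← Finset.mul_sum, hre s, mul_zero, add_zero]
      have hx₁col : ∀ t, ∑ s, x₁ s t = ((univ.filter fun b => tB b = t).card : ℝ) := by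
        intro t
        simp only [hx₁]
        rw [Finset.sum_add_distrib, hcol t, ← Finset.mul_sum, hce t, mul_zero, add_zero]
      have hx₁supp : ∀ s t, x₁ s t ≠ 0 → x s t ≠ 0 := by
        intro s t h hx0
        apply h
        have he0 : e s t = 0 := by
          by_contra he'
          exact hse s t he' hx0
        simp only [hx₁]
        rw [hx0, he0]
        ring
      have hx₁zero : x₁ s₀ t₀ = 0 := by
        simp only [hx₁]; rw [he₀]; ring
      have hcard₁ : (univ.filter fun st : Fin T × Fin T => x₁ st.1 st.2 ≠ 0).card ≤ N := by
        have hss : (univ.filter fun st : Fin T × Fin T => x₁ st.1 st.2 ≠ 0) ⊂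
            (univ.filter fun st : Fin T × Fin T => x st.1 st.2 ≠ 0) := by
          constructor
          · intro st hst
            rw [Finset.mem_filter] at hst ⊢
            exact ⟨mem_univ _, hx₁supp st.1 st.2 hst.2⟩
          · intro h
            have h1 : (s₀, t₀) ∈ univ.filter fun st : Fin T × Fin T => x st.1 st.2 ≠ 0 :=
              Finset.mem_filter.2 ⟨mem_univ _, hx₀ne⟩
            have h2 := h h1
            rw [Finset.mem_filter] at h2
            exact h2.2 hx₁zero
        have := Finset.card_lt_card hss
        omega
      have hx₁util : ∑ s, ∑ t, w s t * x s t ≤ ∑ s, ∑ t, w s t * x₁ s t := by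
        have : ∑ s, ∑ t, w s t * x₁ s t
            = (∑ s, ∑ t, w s t * x s t) + x s₀ t₀ * ∑ s, ∑ t, w s t * e s t := by
          rw [Finset.mul_sum, ← Finset.sum_add_distrib]
          congr 1; funext s
          rw [Finset.mul_sum, ← Finset.sum_add_distrib]
          congr 1; funext t
          simp only [hx₁]; ring
        rw [this]
        have : 0 ≤ x s₀ t₀ * ∑ s, ∑ t, w s t * e s t := by
          apply mul_nonneg _ hwe
          rw [hn₀]; exact Nat.cast_nonneg n₀
        linarith
      obtain ⟨x', h1, h2, h3, h4, h5, h6⟩ := ih x₁ hcard₁ hx₁Nat hx₁row hx₁col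
      exact ⟨x', h1, h2, h3, fun s t h => hx₁supp s t (h4 s t h), le_trans hx₁util h5, h6⟩
    · refine ⟨x, hNat, hrow, hcol, fun s t h => h, le_refl _,
        extreme_of_no_dir tA tB x hNat hrow hcol hE⟩

lemma realize_matrix {A B : Type*} [Fintype A] [Fintype B] [DecidableEq A] [DecidableEq B] {T : ℕ}
    (tA : A → Fin T) (tB : B → Fin T) (x : Fin T → Fin T → ℝ)
    (hNat : ∀ s t, ∃ n : ℕ, x s t = n)
    (hrow : ∀ s, ∑ t, x s t = ((univ.filter fun a => tA a = s).card : ℝ))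
    (hcol : ∀ t, ∑ s, x s t = ((univ.filter fun b => tB b = t).card : ℝ)) :
    ∃ M : A ≃ B, ∀ s t, ((univ.filter fun a => tA a = s ∧ tB (M a) = t).card : ℝ) = x s t := by
  classical
  choose n hn using hNat
  have hrowN : ∀ s, (univ.filter fun a => tA a = s).card = ∑ t, n s t := by
    intro s
    have h := hrow s
    have h2 : ∑ t, x s t = ((∑ t, n s t : ℕ) : ℝ) := by
      rw [Nat.cast_sum]
      exact Finset.sum_congr rfl fun t _ => hn s t
    rw [h2] at h
    exact_mod_cast h.symm
  have hcolN : ∀ t, (univ.filter fun b => tB b = t).card = ∑ s, n s t := by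
    intro t
    have h := hcol t
    have h2 : ∑ s, x s t = ((∑ s, n s t : ℕ) : ℝ) := by
      rw [Nat.cast_sum]
      exact Finset.sum_congr rfl fun s _ => hn s t
    rw [h2] at h
    exact_mod_cast h.symm
  have cardA : ∀ s, Fintype.card {a // tA a = s} = Fintype.card (Σ t : Fin T, Fin (n s t)) := by
    intro s
    rw [Fintype.card_subtype, Fintype.card_sigma]
    simp only [Fintype.card_fin]
    exact hrowN s
  have cardB : ∀ t, Fintype.card {b // tB b = t} = Fintype.card (Σ s : Fin T, Fin (n s t)) := by
    intro t
    rw [Fintype.card_subtype, Fintype.card_sigma]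
    simp only [Fintype.card_fin]
    exact hcolN t
  let eAs : ∀ s, {a // tA a = s} ≃ (Σ t : Fin T, Fin (n s t)) := fun s => Fintype.equivOfCardEq (cardA s)
  let eBs : ∀ t, {b // tB b = t} ≃ (Σ s : Fin T, Fin (n s t)) := fun t => Fintype.equivOfCardEq (cardB t)
  let eA2 : A ≃ Σ s : Fin T, Σ t : Fin T, Fin (n s t) :=
    (Equiv.sigmaFiberEquiv tA).symm.trans (Equiv.sigmaCongrRight eAs)
  let eB2 : B ≃ Σ t : Fin T, Σ s : Fin T, Fin (n s t) :=
    (Equiv.sigmaFiberEquiv tB).symm.trans (Equiv.sigmaCongrRight eBs)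
  let sw : (Σ s : Fin T, Σ t : Fin T, Fin (n s t)) ≃ (Σ t : Fin T, Σ s : Fin T, Fin (n s t)) :=
    { toFun := fun p => ⟨p.2.1, p.1, p.2.2⟩
      invFun := fun p => ⟨p.2.1, p.1, p.2.2⟩
      left_inv := fun ⟨s, t, i⟩ => rfl
      right_inv := fun ⟨t, s, i⟩ => rfl }
  let M : A ≃ B := eA2.trans (sw.trans eB2.symm)
  have fact1 : ∀ a, (eA2 a).1 = tA a := fun a => rfl
  have fact2 : ∀ b, (eB2 b).1 = tB b := fun b => rfl
  have fact3 : ∀ a, tB (M a) = (eA2 a).2.1 := by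
    intro a
    have h := fact2 (M a)
    have : eB2 (M a) = sw (eA2 a) := by
      show eB2 (eB2.symm (sw (eA2 a))) = sw (eA2 a)
      rw [Equiv.apply_symm_apply]
    rw [this] at h
    exact h.symm
  refine ⟨M, ?_⟩
  intro s t
  rw [hn s t]
  congr 1
  have himg : (univ.filter fun a => tA a = s ∧ tB (M a) = t)
      = univ.image (fun i : Fin (n s t) => eA2.symm ⟨s, t, i⟩) := by
    ext a
    simp only [Finset.mem_filter, Finset.mem_image, Finset.mem_univ, true_and]
    constructor
    · rintro ⟨h1, h2⟩
      rcases hq : eA2 a with ⟨s', t', i⟩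
      have hs' : s' = s := by rw [← h1, ← fact1 a, hq]
      have ht' : t' = t := by rw [← h2, fact3 a, hq]
      subst hs'; subst ht'
      exact ⟨i, by rw [← hq, Equiv.symm_apply_apply]⟩
    · rintro ⟨i, rfl⟩
      constructor
      · rw [← fact1 (eA2.symm ⟨s, t, i⟩), Equiv.apply_symm_apply]
      · rw [fact3 (eA2.symm ⟨s, t, i⟩), Equiv.apply_symm_apply]
  rw [himg, Finset.card_image_of_injective _ ?_, Finset.card_univ, Fintype.card_fin]
  intro i j hij
  have h1 := eA2.symm.injective hij
  have h2 := sigma_mk_injective h1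
  simpa using h2

lemma eVal_div {Ω : Type*} [Fintype Ω] (f q : Ω → ℝ) (Z : ℝ) :
    eVal f (fun ω => q ω / Z) = eVal f q / Z := by
  simp only [eVal, div_mul_eq_mul_div, Finset.sum_div]

lemma eVal_le_unnorm {Ω : Type*} [Fintype Ω] (f f' ν : Ω → ℝ) (hν : ∀ ω, 0 ≤ ν ω)
    (h : eVal f (fun ω => ν ω / ∑ ω', ν ω') ≤ eVal f' (fun ω => ν ω / ∑ ω', ν ω')) :
    eVal f ν ≤ eVal f' ν := by
  by_cases hZ : ∑ ω', ν ω' = 0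
  · have hzero : ∀ ω, ν ω = 0 := by
      intro ω
      have := (Finset.sum_eq_zero_iff_of_nonneg (fun ω _ => hν ω)).1 hZ
      exact this ω (mem_univ _)
    simp only [eVal]
    apply le_of_eq
    refine Finset.sum_congr rfl fun ω _ => ?_
    rw [hzero ω, zero_mul, zero_mul]
  · rw [eVal_div, eVal_div] at h
    have hZpos : 0 < ∑ ω', ν ω' :=
      lt_of_le_of_ne (Finset.sum_nonneg fun ω _ => hν ω) (Ne.symm hZ)
    exact (div_le_div_iff_of_pos_right hZpos).mp h

lemma cell_pool {Ω I : Type*} [Fintype Ω] [Fintype I] (f f' : Ω → ℝ) (ν : I → Ω → ℝ)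
    (hν : ∀ i ω, 0 ≤ ν i ω)
    (hcell : ∀ i, eVal f (fun ω => ν i ω / ∑ ω', ν i ω') ≤
      eVal f' (fun ω => ν i ω / ∑ ω', ν i ω')) :
    eVal f (fun ω => (∑ i, ν i ω) / ∑ ω', ∑ i, ν i ω') ≤
      eVal f' (fun ω => (∑ i, ν i ω) / ∑ ω', ∑ i, ν i ω') := by
  have hsum : eVal f (fun ω => ∑ i, ν i ω) ≤ eVal f' (fun ω => ∑ i, ν i ω) := by
    have h1 : ∀ (h : Ω → ℝ), eVal h (fun ω => ∑ i, ν i ω) = ∑ i, eVal h (ν i) := by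
      intro h
      simp only [eVal, Finset.sum_mul]
      rw [Finset.sum_comm]
    rw [h1, h1]
    exact Finset.sum_le_sum fun i _ => eVal_le_unnorm f f' (ν i) (hν i) (hcell i)
  rw [eVal_div, eVal_div]
  by_cases hZ : ∑ ω', ∑ i, ν i ω' = 0
  · rw [hZ, div_zero, div_zero]
  · have hZpos : 0 < ∑ ω', ∑ i, ν i ω' :=
      lt_of_le_of_ne (Finset.sum_nonneg fun ω _ => Finset.sum_nonneg fun i _ => hν i ω)
        (Ne.symm hZ)
    exact (div_le_div_iff_of_pos_right hZpos).mpr hsum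

lemma count_row {A B : Type*} [Fintype A] [Fintype B] [DecidableEq A] [DecidableEq B] {T : ℕ}
    (tA : A → Fin T) (tB : B → Fin T) (M : A ≃ B) (s : Fin T) :
    ∑ t, ((univ.filter fun a => tA a = s ∧ tB (M a) = t).card : ℝ)
      = ((univ.filter fun a => tA a = s).card : ℝ) := by
  rw [← Nat.cast_sum]
  congr 1
  rw [Finset.card_eq_sum_card_fiberwise (f := fun a => tB (M a)) (t := univ)
    (fun a _ => mem_univ _)]
  exact (Finset.sum_congr rfl fun t _ => by rw [Finset.filter_filter]).symm

lemma count_col {A B : Type*} [Fintype A] [Fintype B] [DecidableEq A] [DecidableEq B] {T : ℕ}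
    (tA : A → Fin T) (tB : B → Fin T) (M : A ≃ B) (t : Fin T) :
    ∑ s, ((univ.filter fun a => tA a = s ∧ tB (M a) = t).card : ℝ)
      = ((univ.filter fun b => tB b = t).card : ℝ) := by
  have hbij : ∀ s, (univ.filter fun a => tA a = s ∧ tB (M a) = t).card
      = (univ.filter fun b => tB b = t ∧ tA (M.symm b) = s).card := by
    intro s
    apply Finset.card_bij' (fun a _ => M a) (fun b _ => M.symm b)
    · intro a ha
      rw [Finset.mem_filter] at ha ⊢
      exact ⟨mem_univ _, ha.2.2, by rw [Equiv.symm_apply_apply]; exact ha.2.1⟩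
    · intro b hb
      rw [Finset.mem_filter] at hb ⊢
      exact ⟨mem_univ _, hb.2.2, by rw [Equiv.apply_symm_apply]; exact hb.2.1⟩
    · intro a _; rw [Equiv.symm_apply_apply]
    · intro b _; rw [Equiv.apply_symm_apply]
  rw [Finset.sum_congr rfl fun s _ => congrArg _ (hbij s)]
  rw [← Nat.cast_sum]
  congr 1
  rw [Finset.card_eq_sum_card_fiberwise (f := fun b => tA (M.symm b)) (t := univ)
    (fun b _ => mem_univ _)]
  refine (Finset.sum_congr rfl fun s _ => ?_).symm
  rw [Finset.filter_filter]

lemma uMatch_group {Ω A B : Type*} [Fintype Ω] [Fintype A] [Fintype B]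
    [DecidableEq A] [DecidableEq B] {T : ℕ}
    (tA : A → Fin T) (tB : B → Fin T) (u : A → B → Ω → ℝ) (U : Fin T → Fin T → Ω → ℝ)
    (hu : ∀ a b ω, u a b ω = U (tA a) (tB b) ω) (M : A ≃ B) (ω : Ω) :
    ∑ a, u a (M a) ω
      = ∑ s, ∑ t, ((univ.filter fun a => tA a = s ∧ tB (M a) = t).card : ℝ) * U s t ω := by
  have h1 : ∑ a, u a (M a) ω = ∑ a, U (tA a) (tB (M a)) ω :=
    Finset.sum_congr rfl fun a _ => hu a (M a) ω
  rw [h1]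
  rw [← Finset.sum_fiberwise (s := univ) (g := fun a => (tA a, tB (M a)))
    (f := fun a => U (tA a) (tB (M a)) ω)]
  rw [Fintype.sum_prod_type]
  refine Finset.sum_congr rfl fun s _ => Finset.sum_congr rfl fun t _ => ?_
  have h2 : (univ.filter fun a => (tA a, tB (M a)) = (s, t))
      = (univ.filter fun a => tA a = s ∧ tB (M a) = t) := by
    apply Finset.filter_congr
    intro a _
    simp [Prod.ext_iff]
  rw [h2]
  have h3 : ∀ a ∈ univ.filter fun a => tA a = s ∧ tB (M a) = t,
      U (tA a) (tB (M a)) ω = U s t ω := by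
    intro a ha
    rw [Finset.mem_filter] at ha
    rw [ha.2.1, ha.2.2]
  rw [Finset.sum_congr rfl h3, Finset.sum_const, nsmul_eq_mul]

set_option maxHeartbeats 1600000 in
/-- **Private persuasion needs only subtype-level signals and useful matchings**
(Theorem 11): in the type-based model, every stable private policy can be
converted to a stable indicative private policy over meta-signals `𝓛 × 𝓜`,
at least as good, whose matchings all realize matrices in `V*`, and which
signals the same preference to agents of the same subtype. -/
theorem private_subtype_useful_matchings
    {Ω A B G : Type} [Fintype Ω] [Nonempty Ω] [Fintype A] [Fintype B]
    [DecidableEq A] [DecidableEq B] [Fintype G] [DecidableEq G] {T : ℕ}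
    (tA : A → Fin T) (tB : B → Fin T)
    (VA VB : Fin T → Fin T → Ω → ℝ) (U : Fin T → Fin T → Ω → ℝ)
    (μ : Ω → ℝ) (hμ : IsDist μ) (hμpos : ∀ ω, 0 < μ ω)
    (vA : A → B → Ω → ℝ) (vB : B → A → Ω → ℝ) (u : A → B → Ω → ℝ)
    (hvA : ∀ a b ω, vA a b ω = VA (tA a) (tB b) ω)
    (hvB : ∀ b a ω, vB b a ω = VB (tB b) (tA a) ω)
    (hu : ∀ a b ω, u a b ω = U (tA a) (tB b) ω)
    (σ : Ω → (((A ⊕ B) → G) × (A ≃ B)) → ℝ)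
    (hpol : IsPolicy σ) (hstab : StablePrivate μ vA vB σ) :
    ∃ σ' : Ω → (Pref A B × (A ≃ B)) → ℝ,
      IsPolicy σ' ∧
      StablePrivateProf μ vA vB σ' ∧
      IndicativePrivate μ vA vB σ' ∧
      polU μ σ (fun s ω => uMatch u s.2 ω) ≤ polU μ σ' (fun s ω => uMatch u s.2 ω) ∧
      (∀ s, 0 < sigPr μ σ' s → ∃ x ∈ Vstar tA tB, RealizesMatrix tA tB s.2 x) ∧
      (∀ s : Pref A B × (A ≃ B), 0 < sigPr μ σ' s →
        (∀ a a' : A, tA a = tA a' → tB (s.2 a) = tB (s.2 a') → s.1.1 a = s.1.1 a') ∧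
        (∀ b b' : B, tB b = tB b' → tA (s.2.symm b) = tA (s.2.symm b') →
          s.1.2 b = s.1.2 b')) := by
  classical
  -- Step 1: improve each matching to one realizing an extreme point.
  have himp : ∀ M : A ≃ B, ∃ M' : A ≃ B,
      (∀ s t, (univ.filter fun a => tA a = s ∧ tB (M' a) = t).Nonempty →
        (univ.filter fun a => tA a = s ∧ tB (M a) = t).Nonempty) ∧
      (∑ s, ∑ t, (∑ ω, μ ω * ((∑ g : (A ⊕ B) → G, σ ω (g, M)) * U s t ω)) *
          ((univ.filter fun a => tA a = s ∧ tB (M a) = t).card : ℝ)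
        ≤ ∑ s, ∑ t, (∑ ω, μ ω * ((∑ g : (A ⊕ B) → G, σ ω (g, M)) * U s t ω)) *
          ((univ.filter fun a => tA a = s ∧ tB (M' a) = t).card : ℝ)) ∧
      (∃ x ∈ Vstar tA tB, RealizesMatrix tA tB M' x) := by
    intro M
    obtain ⟨x', hx1, hx2, hx3, hx4, hx5, hx6⟩ :=
      descent tA tB (fun s t => ∑ ω, μ ω * ((∑ g : (A ⊕ B) → G, σ ω (g, M)) * U s t ω))
        (Fintype.card (Fin T × Fin T))
        (fun s t => ((univ.filter fun a => tA a = s ∧ tB (M a) = t).card : ℝ))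
        (by rw [← Finset.card_univ]; exact Finset.card_filter_le _ _)
        (fun s t => ⟨_, rfl⟩)
        (fun s => count_row tA tB M s) (fun t => count_col tA tB M t)
    obtain ⟨M', hM'⟩ := realize_matrix tA tB x' hx1 hx2 hx3
    refine ⟨M', ?_, ?_, ⟨x', Set.mem_iUnion.2 ⟨_, hx6⟩, fun s t => hM' s t⟩⟩
    · intro s t h
      have h1 : x' s t ≠ 0 := by
        rw [← hM' s t]
        exact_mod_cast Finset.card_pos.2 h |>.ne'
      have h2 := hx4 s t h1
      rw [Finset.card_pos.symm]
      · exact Nat.pos_of_ne_zero (by exact_mod_cast h2)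
    · calc ∑ s, ∑ t, (∑ ω, μ ω * ((∑ g : (A ⊕ B) → G, σ ω (g, M)) * U s t ω)) *
            ((univ.filter fun a => tA a = s ∧ tB (M a) = t).card : ℝ)
          ≤ ∑ s, ∑ t, (∑ ω, μ ω * ((∑ g : (A ⊕ B) → G, σ ω (g, M)) * U s t ω)) * x' s t := hx5
        _ = _ := by
            refine Finset.sum_congr rfl fun s _ => Finset.sum_congr rfl fun t _ => ?_
            rw [hM' s t]
  choose F hFsupp hFutil hFstar using himp
  -- occupancy of subtypes realized by F M, inside M
  have hoccA : ∀ (M : A ≃ B) (a : A),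
      (univ.filter fun a' => tA a' = tA a ∧ tB (M a') = tB (F M a)).Nonempty := by
    intro M a
    exact hFsupp M (tA a) (tB (F M a)) ⟨a, Finset.mem_filter.2 ⟨mem_univ _, rfl, rfl⟩⟩
  have hoccB : ∀ (M : A ≃ B) (b : B),
      (univ.filter fun b' => tB b' = tB b ∧ tA (M.symm b') = tA ((F M).symm b)).Nonempty := by
    intro M b
    have h := hoccA M ((F M).symm b)
    rw [Equiv.apply_symm_apply] at h
    obtain ⟨a₂, ha₂⟩ := h
    rw [Finset.mem_filter] at ha₂
    refine ⟨M a₂, Finset.mem_filter.2 ⟨mem_univ _, ha₂.2.2, ?_⟩⟩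
    rw [Equiv.symm_apply_apply]
    exact ha₂.2.1
  -- preference builders and representatives
  set RA : Fin T → (Ω → ℝ) → B → B → Bool := fun s p y y' =>
    decide (eVal (fun ω => VA s (tB y) ω) p ≤ eVal (fun ω => VA s (tB y') ω) p) with hRA
  set RB : Fin T → (Ω → ℝ) → A → A → Bool := fun t p z z' =>
    decide (eVal (fun ω => VB t (tA z) ω) p ≤ eVal (fun ω => VB t (tA z') ω) p) with hRB
  set cA : (A ≃ B) → A → A := fun M a =>
    if h : (univ.filter fun a' => tA a' = tA a ∧ tB (M a') = tB (F M a)).Nonempty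
    then h.choose else a with hcA
  set cB : (A ≃ B) → B → B := fun M b =>
    if h : (univ.filter fun b' => tB b' = tB b ∧ tA (M.symm b') = tA ((F M).symm b)).Nonempty
    then h.choose else b with hcB
  have hcAspec : ∀ (M : A ≃ B) a, tA (cA M a) = tA a ∧ tB (M (cA M a)) = tB (F M a) := by
    intro M a
    simp only [hcA]
    rw [dif_pos (hoccA M a)]
    have h := (hoccA M a).choose_spec
    rw [Finset.mem_filter] at h
    exact h.2
  have hcBspec : ∀ (M : A ≃ B) b, tB (cB M b) = tB b ∧ tA (M.symm (cB M b)) = tA ((F M).symm b) := by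
    intro M b
    simp only [hcB]
    rw [dif_pos (hoccB M b)]
    have h := (hoccB M b).choose_spec
    rw [Finset.mem_filter] at h
    exact h.2
  have hcAuni : ∀ (M : A ≃ B) a a', tA a = tA a' → tB (F M a) = tB (F M a') → cA M a = cA M a' := by
    intro M a a' h1 h2
    simp only [hcA, h1, h2]
    rw [dif_pos (hoccA M a'), dif_pos (hoccA M a')]
  have hcBuni : ∀ (M : A ≃ B) b b', tB b = tB b' → tA ((F M).symm b) = tA ((F M).symm b') →
      cB M b = cB M b' := by
    intro M b b' h1 h2
    simp only [hcB, h1, h2]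
    rw [dif_pos (hoccB M b'), dif_pos (hoccB M b')]
  -- the signal map
  set LamA : ((A ⊕ B) → G) → (A ≃ B) → A → (B → B → Bool) := fun g M a =>
    RA (tA a) (postPrivA μ σ (cA M a) (g (Sum.inl (cA M a))) M) with hLamA
  set LamB : ((A ⊕ B) → G) → (A ≃ B) → B → (A → A → Bool) := fun g M b =>
    RB (tB b) (postPrivB μ σ (cB M b) (g (Sum.inr (cB M b))) M) with hLamB
  set Lam : (((A ⊕ B) → G) × (A ≃ B)) → (Pref A B × (A ≃ B)) := fun gm =>
    ((LamA gm.1 gm.2, LamB gm.1 gm.2), F gm.2) with hLam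
  set σ' : Ω → (Pref A B × (A ≃ B)) → ℝ := fun ω s' =>
    ∑ gm : ((A ⊕ B) → G) × (A ≃ B), if Lam gm = s' then σ ω gm else 0 with hσ'
  have hσnn : ∀ ω gm, 0 ≤ σ ω gm := fun ω => (hpol ω).1
  have hμnn : ∀ ω, 0 ≤ μ ω := fun ω => le_of_lt (hμpos ω)
  have hmargAnn : ∀ c γ (M : A ≃ B) ω, 0 ≤ margA μ σ c γ M ω := by
    intro c γ M ω
    apply mul_nonneg (hμnn ω)
    apply Finset.sum_nonneg
    intro g _
    split_ifs
    · exact hσnn ω _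
    · exact le_refl 0
  have hmargBnn : ∀ c γ (M : A ≃ B) ω, 0 ≤ margB μ σ c γ M ω := by
    intro c γ M ω
    apply mul_nonneg (hμnn ω)
    apply Finset.sum_nonneg
    intro g _
    split_ifs
    · exact hσnn ω _
    · exact le_refl 0
  -- σ' is a policy
  have hσ'pol : IsPolicy σ' := by
    intro ω
    constructor
    · intro s'
      apply Finset.sum_nonneg
      intro gm _
      split_ifs
      · exact hσnn ω gm
      · exact le_refl 0
    · rw [hσ']
      rw [Finset.sum_comm]
      have : ∀ gm : ((A ⊕ B) → G) × (A ≃ B),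
          (∑ s' : Pref A B × (A ≃ B), if Lam gm = s' then σ ω gm else 0) = σ ω gm := by
        intro gm
        rw [Finset.sum_eq_single_of_mem (Lam gm) (mem_univ _)]
        · rw [if_pos rfl]
        · intro s' _ hs'
          rw [if_neg (fun h => hs' h.symm)]
      rw [Finset.sum_congr rfl fun gm _ => this gm]
      exact (hpol ω).2
  -- decomposition of meta-signal probabilities
  have hsig' : ∀ s', sigPr μ σ' s' = ∑ gm : ((A ⊕ B) → G) × (A ≃ B),
      if Lam gm = s' then sigPr μ σ gm else 0 := by
    intro s'
    simp only [sigPr, hσ', Finset.mul_sum, mul_ite, mul_zero]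
    rw [Finset.sum_comm]
    refine Finset.sum_congr rfl fun gm _ => ?_
    split_ifs with h
    · rfl
    · exact Finset.sum_eq_zero fun ω _ => rfl
  have hsigσnn : ∀ gm, 0 ≤ sigPr μ σ gm := by
    intro gm
    apply Finset.sum_nonneg
    intro ω _
    exact mul_nonneg (hμnn ω) (hσnn ω gm)
  have hwit : ∀ s', 0 < sigPr μ σ' s' →
      ∃ gm, Lam gm = s' ∧ 0 < sigPr μ σ gm := by
    intro s' hpos
    by_contra h
    push_neg at h
    have : sigPr μ σ' s' ≤ 0 := by
      rw [hsig' s']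
      apply Finset.sum_nonpos
      intro gm _
      split_ifs with hc
      · exact h gm hc
      · exact le_refl 0
    linarith
  -- decomposition of the pooled marginal, A side
  have hpmA : ∀ (a : A) (r : B → B → Bool) (M' : A ≃ B) (ω : Ω),
      pmargA μ σ' a r M' ω = ∑ i : (A ≃ B) × G,
        if (F i.1 = M' ∧ RA (tA a) (postPrivA μ σ (cA i.1 a) i.2 i.1) = r)
        then margA μ σ (cA i.1 a) i.2 i.1 ω else 0 := by
    intro a r M' ω
    have e1 : ∀ L : Pref A B,
        (if L.1 a = r then (∑ gm : ((A ⊕ B) → G) × (A ≃ B),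
            if Lam gm = (L, M') then σ ω gm else 0) else 0)
        = ∑ gm : ((A ⊕ B) → G) × (A ≃ B),
            if (L.1 a = r ∧ Lam gm = (L, M')) then σ ω gm else 0 := by
      intro L
      split_ifs with h
      · exact Finset.sum_congr rfl fun gm _ => if_congr (and_iff_right h).symm rfl rfl
      · exact (Finset.sum_eq_zero fun gm _ => if_neg fun hc => h hc.1).symm
    have e2 : ∀ gm : ((A ⊕ B) → G) × (A ≃ B),
        (∑ L : Pref A B, if (L.1 a = r ∧ Lam gm = (L, M')) then σ ω gm else 0)
        = if ((Lam gm).2 = M' ∧ ((Lam gm).1).1 a = r) then σ ω gm else 0 := by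
      intro gm
      by_cases hC : (Lam gm).2 = M' ∧ ((Lam gm).1).1 a = r
      · rw [if_pos hC]
        rw [Finset.sum_eq_single_of_mem ((Lam gm).1) (mem_univ _)]
        · rw [if_pos]
          refine ⟨hC.2, ?_⟩
          have h := hC.1
          rw [← h]
        · intro L _ hL
          rw [if_neg]
          rintro ⟨h1, h2⟩
          exact hL (congrArg Prod.fst h2).symm
      · rw [if_neg hC]
        apply Finset.sum_eq_zero
        intro L _
        rw [if_neg]
        rintro ⟨h1, h2⟩
        refine hC ⟨congrArg Prod.snd h2, ?_⟩
        rw [congrArg Prod.fst h2]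
        exact h1
    have e3 : ∀ M : A ≃ B, ∀ g : (A ⊕ B) → G,
        (if ((Lam (g, M)).2 = M' ∧ ((Lam (g, M)).1).1 a = r) then σ ω (g, M) else 0)
        = if (F M = M' ∧
            RA (tA a) (postPrivA μ σ (cA M a) (g (Sum.inl (cA M a))) M) = r)
          then σ ω (g, M) else 0 := by
      intro M g
      simp only [hLam, hLamA]
    have e4 : ∀ M : A ≃ B,
        (∑ g : (A ⊕ B) → G, if (F M = M' ∧
            RA (tA a) (postPrivA μ σ (cA M a) (g (Sum.inl (cA M a))) M) = r)
          then σ ω (g, M) else 0)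
        = ∑ γ : G, if (F M = M' ∧ RA (tA a) (postPrivA μ σ (cA M a) γ M) = r)
            then (∑ g : (A ⊕ B) → G, if g (Sum.inl (cA M a)) = γ then σ ω (g, M) else 0)
            else 0 := by
      intro M
      have e5 : ∀ γ : G,
          (if (F M = M' ∧ RA (tA a) (postPrivA μ σ (cA M a) γ M) = r)
            then (∑ g : (A ⊕ B) → G, if g (Sum.inl (cA M a)) = γ then σ ω (g, M) else 0)
            else 0)
          = ∑ g : (A ⊕ B) → G, if (g (Sum.inl (cA M a)) = γ ∧ (F M = M' ∧
              RA (tA a) (postPrivA μ σ (cA M a) γ M) = r)) then σ ω (g, M) else 0 := by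
        intro γ
        split_ifs with h
        · exact Finset.sum_congr rfl fun g _ => if_congr (and_iff_left h).symm rfl rfl
        · exact (Finset.sum_eq_zero fun g _ => if_neg fun hc => h hc.2).symm
      rw [Finset.sum_congr rfl fun γ _ => e5 γ]
      rw [Finset.sum_comm]
      refine Finset.sum_congr rfl fun g _ => ?_
      rw [Finset.sum_eq_single_of_mem (g (Sum.inl (cA M a))) (mem_univ _)]
      · simp
      · intro γ _ hγ
        rw [if_neg]
        rintro ⟨h1, h2⟩
        exact hγ h1.symm
    calc pmargA μ σ' a r M' ω
        = μ ω * ∑ L : Pref A B, if L.1 a = r then σ' ω (L, M') else 0 := rfl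
      _ = μ ω * ∑ gm : ((A ⊕ B) → G) × (A ≃ B),
            if ((Lam gm).2 = M' ∧ ((Lam gm).1).1 a = r) then σ ω gm else 0 := by
          rw [hσ']
          congr 1
          rw [Finset.sum_congr rfl fun L _ => e1 L, Finset.sum_comm]
          exact Finset.sum_congr rfl fun gm _ => e2 gm
      _ = μ ω * ∑ M : A ≃ B, ∑ γ : G,
            if (F M = M' ∧ RA (tA a) (postPrivA μ σ (cA M a) γ M) = r)
            then (∑ g : (A ⊕ B) → G, if g (Sum.inl (cA M a)) = γ then σ ω (g, M) else 0)
            else 0 := by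
          congr 1
          rw [Fintype.sum_prod_type, Finset.sum_comm]
          refine Finset.sum_congr rfl fun M _ => ?_
          rw [Finset.sum_congr rfl fun g _ => e3 M g]
          exact e4 M
      _ = ∑ M : A ≃ B, ∑ γ : G,
            if (F M = M' ∧ RA (tA a) (postPrivA μ σ (cA M a) γ M) = r)
            then margA μ σ (cA M a) γ M ω else 0 := by
          rw [Finset.mul_sum]
          refine Finset.sum_congr rfl fun M _ => ?_
          rw [Finset.mul_sum]
          refine Finset.sum_congr rfl fun γ _ => ?_
          rw [mul_ite, mul_zero]
          rfl
      _ = _ := (Fintype.sum_prod_type (fun i : (A ≃ B) × G =>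
            if (F i.1 = M' ∧ RA (tA a) (postPrivA μ σ (cA i.1 a) i.2 i.1) = r)
            then margA μ σ (cA i.1 a) i.2 i.1 ω else 0)).symm
  have hpmB : ∀ (b : B) (r : A → A → Bool) (M' : A ≃ B) (ω : Ω),
      pmargB μ σ' b r M' ω = ∑ i : (A ≃ B) × G,
        if (F i.1 = M' ∧ RB (tB b) (postPrivB μ σ (cB i.1 b) i.2 i.1) = r)
        then margB μ σ (cB i.1 b) i.2 i.1 ω else 0 := by
    intro b r M' ω
    have e1 : ∀ L : Pref A B,
        (if L.2 b = r then (∑ gm : ((A ⊕ B) → G) × (A ≃ B),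
            if Lam gm = (L, M') then σ ω gm else 0) else 0)
        = ∑ gm : ((A ⊕ B) → G) × (A ≃ B),
            if (L.2 b = r ∧ Lam gm = (L, M')) then σ ω gm else 0 := by
      intro L
      split_ifs with h
      · exact Finset.sum_congr rfl fun gm _ => if_congr (and_iff_right h).symm rfl rfl
      · exact (Finset.sum_eq_zero fun gm _ => if_neg fun hc => h hc.1).symm
    have e2 : ∀ gm : ((A ⊕ B) → G) × (A ≃ B),
        (∑ L : Pref A B, if (L.2 b = r ∧ Lam gm = (L, M')) then σ ω gm else 0)
        = if ((Lam gm).2 = M' ∧ ((Lam gm).1).2 b = r) then σ ω gm else 0 := by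
      intro gm
      by_cases hC : (Lam gm).2 = M' ∧ ((Lam gm).1).2 b = r
      · rw [if_pos hC]
        rw [Finset.sum_eq_single_of_mem ((Lam gm).1) (mem_univ _)]
        · rw [if_pos]
          refine ⟨hC.2, ?_⟩
          have h := hC.1
          rw [← h]
        · intro L _ hL
          rw [if_neg]
          rintro ⟨h1, h2⟩
          exact hL (congrArg Prod.fst h2).symm
      · rw [if_neg hC]
        apply Finset.sum_eq_zero
        intro L _
        rw [if_neg]
        rintro ⟨h1, h2⟩
        refine hC ⟨congrArg Prod.snd h2, ?_⟩
        rw [congrArg Prod.fst h2]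
        exact h1
    have e3 : ∀ M : A ≃ B, ∀ g : (A ⊕ B) → G,
        (if ((Lam (g, M)).2 = M' ∧ ((Lam (g, M)).1).2 b = r) then σ ω (g, M) else 0)
        = if (F M = M' ∧
            RB (tB b) (postPrivB μ σ (cB M b) (g (Sum.inr (cB M b))) M) = r)
          then σ ω (g, M) else 0 := by
      intro M g
      simp only [hLam, hLamB]
    have e4 : ∀ M : A ≃ B,
        (∑ g : (A ⊕ B) → G, if (F M = M' ∧
            RB (tB b) (postPrivB μ σ (cB M b) (g (Sum.inr (cB M b))) M) = r)
          then σ ω (g, M) else 0)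
        = ∑ γ : G, if (F M = M' ∧ RB (tB b) (postPrivB μ σ (cB M b) γ M) = r)
            then (∑ g : (A ⊕ B) → G, if g (Sum.inr (cB M b)) = γ then σ ω (g, M) else 0)
            else 0 := by
      intro M
      have e5 : ∀ γ : G,
          (if (F M = M' ∧ RB (tB b) (postPrivB μ σ (cB M b) γ M) = r)
            then (∑ g : (A ⊕ B) → G, if g (Sum.inr (cB M b)) = γ then σ ω (g, M) else 0)
            else 0)
          = ∑ g : (A ⊕ B) → G, if (g (Sum.inr (cB M b)) = γ ∧ (F M = M' ∧
              RB (tB b) (postPrivB μ σ (cB M b) γ M) = r)) then σ ω (g, M) else 0 := by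
        intro γ
        split_ifs with h
        · exact Finset.sum_congr rfl fun g _ => if_congr (and_iff_left h).symm rfl rfl
        · exact (Finset.sum_eq_zero fun g _ => if_neg fun hc => h hc.2).symm
      rw [Finset.sum_congr rfl fun γ _ => e5 γ]
      rw [Finset.sum_comm]
      refine Finset.sum_congr rfl fun g _ => ?_
      rw [Finset.sum_eq_single_of_mem (g (Sum.inr (cB M b))) (mem_univ _)]
      · simp
      · intro γ _ hγ
        rw [if_neg]
        rintro ⟨h1, h2⟩
        exact hγ h1.symm
    calc pmargB μ σ' b r M' ω
        = μ ω * ∑ L : Pref A B, if L.2 b = r then σ' ω (L, M') else 0 := rfl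
      _ = μ ω * ∑ gm : ((A ⊕ B) → G) × (A ≃ B),
            if ((Lam gm).2 = M' ∧ ((Lam gm).1).2 b = r) then σ ω gm else 0 := by
          rw [hσ']
          congr 1
          rw [Finset.sum_congr rfl fun L _ => e1 L, Finset.sum_comm]
          exact Finset.sum_congr rfl fun gm _ => e2 gm
      _ = μ ω * ∑ M : A ≃ B, ∑ γ : G,
            if (F M = M' ∧ RB (tB b) (postPrivB μ σ (cB M b) γ M) = r)
            then (∑ g : (A ⊕ B) → G, if g (Sum.inr (cB M b)) = γ then σ ω (g, M) else 0)
            else 0 := by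
          congr 1
          rw [Fintype.sum_prod_type, Finset.sum_comm]
          refine Finset.sum_congr rfl fun M _ => ?_
          rw [Finset.sum_congr rfl fun g _ => e3 M g]
          exact e4 M
      _ = ∑ M : A ≃ B, ∑ γ : G,
            if (F M = M' ∧ RB (tB b) (postPrivB μ σ (cB M b) γ M) = r)
            then margB μ σ (cB M b) γ M ω else 0 := by
          rw [Finset.mul_sum]
          refine Finset.sum_congr rfl fun M _ => ?_
          rw [Finset.mul_sum]
          refine Finset.sum_congr rfl fun γ _ => ?_
          rw [mul_ite, mul_zero]
          rfl
      _ = _ := (Fintype.sum_prod_type (fun i : (A ≃ B) × G =>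
            if (F i.1 = M' ∧ RB (tB b) (postPrivB μ σ (cB i.1 b) i.2 i.1) = r)
            then margB μ σ (cB i.1 b) i.2 i.1 ω else 0)).symm
  -- cell property of pooled posteriors
  have cellA : ∀ (a : A) (r : B → B → Bool) (M' : A ≃ B) (y y' : B), r y y' = true →
      eVal (vA a y) (ppostA μ σ' a r M') ≤ eVal (vA a y') (ppostA μ σ' a r M') := by
    intro a r M' y y' hr
    have hrw : ppostA μ σ' a r M' = fun ω =>
        (∑ i : (A ≃ B) × G,
          (if (F i.1 = M' ∧ RA (tA a) (postPrivA μ σ (cA i.1 a) i.2 i.1) = r)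
           then margA μ σ (cA i.1 a) i.2 i.1 ω else 0)) /
        (∑ ω', ∑ i : (A ≃ B) × G,
          (if (F i.1 = M' ∧ RA (tA a) (postPrivA μ σ (cA i.1 a) i.2 i.1) = r)
           then margA μ σ (cA i.1 a) i.2 i.1 ω' else 0)) := by
      funext ω
      simp only [ppostA]
      rw [hpmA a r M' ω]
      congr 1
      exact Finset.sum_congr rfl fun ω' _ => hpmA a r M' ω'
    rw [hrw]
    apply cell_pool
    · intro i ω
      split_ifs
      · exact hmargAnn _ _ _ _
      · exact le_refl 0
    · intro i
      by_cases hc : F i.1 = M' ∧ RA (tA a) (postPrivA μ σ (cA i.1 a) i.2 i.1) = r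
      · simp only [if_pos hc]
        have hpost : (fun ω => margA μ σ (cA i.1 a) i.2 i.1 ω /
            ∑ ω', margA μ σ (cA i.1 a) i.2 i.1 ω') = postPrivA μ σ (cA i.1 a) i.2 i.1 := rfl
        rw [hpost]
        have hb : RA (tA a) (postPrivA μ σ (cA i.1 a) i.2 i.1) y y' = true := by
          rw [hc.2]; exact hr
        simp only [hRA] at hb
        have hineq := of_decide_eq_true hb
        have eA1 : vA a y = fun ω => VA (tA a) (tB y) ω := funext fun ω => hvA a y ω
        have eA2 : vA a y' = fun ω => VA (tA a) (tB y') ω := funext fun ω => hvA a y' ω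
        rw [eA1, eA2]
        exact hineq
      · simp only [if_neg hc]
        simp [eVal]
  have cellB : ∀ (b : B) (r : A → A → Bool) (M' : A ≃ B) (z z' : A), r z z' = true →
      eVal (vB b z) (ppostB μ σ' b r M') ≤ eVal (vB b z') (ppostB μ σ' b r M') := by
    intro b r M' z z' hr
    have hrw : ppostB μ σ' b r M' = fun ω =>
        (∑ i : (A ≃ B) × G,
          (if (F i.1 = M' ∧ RB (tB b) (postPrivB μ σ (cB i.1 b) i.2 i.1) = r)
           then margB μ σ (cB i.1 b) i.2 i.1 ω else 0)) /
        (∑ ω', ∑ i : (A ≃ B) × G,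
          (if (F i.1 = M' ∧ RB (tB b) (postPrivB μ σ (cB i.1 b) i.2 i.1) = r)
           then margB μ σ (cB i.1 b) i.2 i.1 ω' else 0)) := by
      funext ω
      simp only [ppostB]
      rw [hpmB b r M' ω]
      congr 1
      exact Finset.sum_congr rfl fun ω' _ => hpmB b r M' ω'
    rw [hrw]
    apply cell_pool
    · intro i ω
      split_ifs
      · exact hmargBnn _ _ _ _
      · exact le_refl 0
    · intro i
      by_cases hc : F i.1 = M' ∧ RB (tB b) (postPrivB μ σ (cB i.1 b) i.2 i.1) = r
      · simp only [if_pos hc]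
        have hpost : (fun ω => margB μ σ (cB i.1 b) i.2 i.1 ω /
            ∑ ω', margB μ σ (cB i.1 b) i.2 i.1 ω') = postPrivB μ σ (cB i.1 b) i.2 i.1 := rfl
        rw [hpost]
        have hb : RB (tB b) (postPrivB μ σ (cB i.1 b) i.2 i.1) z z' = true := by
          rw [hc.2]; exact hr
        simp only [hRB] at hb
        have hineq := of_decide_eq_true hb
        have eB1 : vB b z = fun ω => VB (tB b) (tA z) ω := funext fun ω => hvB b z ω
        have eB2 : vB b z' = fun ω => VB (tB b) (tA z') ω := funext fun ω => hvB b z' ω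
        rw [eB1, eB2]
        exact hineq
      · simp only [if_neg hc]
        simp [eVal]
  -- total preorder facts
  have hRAtotal : ∀ s p, TotalPre (RA s p) := by
    intro s p
    constructor
    · intro y y'
      rcases le_total (eVal (fun ω => VA s (tB y) ω) p) (eVal (fun ω => VA s (tB y') ω) p)
        with h | h
      · left; simp only [hRA]; exact decide_eq_true h
      · right; simp only [hRA]; exact decide_eq_true h
    · intro y y' y'' h1 h2
      simp only [hRA] at h1 h2 ⊢
      exact decide_eq_true (le_trans (of_decide_eq_true h1) (of_decide_eq_true h2))
  have hRBtotal : ∀ t p, TotalPre (RB t p) := by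
    intro t p
    constructor
    · intro z z'
      rcases le_total (eVal (fun ω => VB t (tA z) ω) p) (eVal (fun ω => VB t (tA z') ω) p)
        with h | h
      · left; simp only [hRB]; exact decide_eq_true h
      · right; simp only [hRB]; exact decide_eq_true h
    · intro z z' z'' h1 h2
      simp only [hRB] at h1 h2 ⊢
      exact decide_eq_true (le_trans (of_decide_eq_true h1) (of_decide_eq_true h2))
  -- utility computation
  have hkeyM : ∀ (M M'' : A ≃ B),
      ∑ ω, μ ω * ((∑ g : (A ⊕ B) → G, σ ω (g, M)) * uMatch u M'' ω)
      = ∑ s, ∑ t, (∑ ω, μ ω * ((∑ g : (A ⊕ B) → G, σ ω (g, M)) * U s t ω)) *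
          ((univ.filter fun a => tA a = s ∧ tB (M'' a) = t).card : ℝ) := by
    intro M M''
    have huM : ∀ ω, uMatch u M'' ω = ∑ s, ∑ t,
        ((univ.filter fun a => tA a = s ∧ tB (M'' a) = t).card : ℝ) * U s t ω := by
      intro ω
      simp only [uMatch]
      exact uMatch_group tA tB u U hu M'' ω
    calc ∑ ω, μ ω * ((∑ g : (A ⊕ B) → G, σ ω (g, M)) * uMatch u M'' ω)
        = ∑ ω, ∑ s, ∑ t, (μ ω * ((∑ g : (A ⊕ B) → G, σ ω (g, M)) * U s t ω)) *
            ((univ.filter fun a => tA a = s ∧ tB (M'' a) = t).card : ℝ) := by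
          refine Finset.sum_congr rfl fun ω _ => ?_
          rw [huM ω, Finset.mul_sum, Finset.mul_sum]
          refine Finset.sum_congr rfl fun s _ => ?_
          rw [Finset.mul_sum, Finset.mul_sum]
          refine Finset.sum_congr rfl fun t _ => ?_
          ring
      _ = ∑ s, ∑ t, ∑ ω, (μ ω * ((∑ g : (A ⊕ B) → G, σ ω (g, M)) * U s t ω)) *
            ((univ.filter fun a => tA a = s ∧ tB (M'' a) = t).card : ℝ) := by
          rw [Finset.sum_comm]
          refine Finset.sum_congr rfl fun s _ => ?_
          rw [Finset.sum_comm]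
      _ = _ := by
          refine Finset.sum_congr rfl fun s _ => Finset.sum_congr rfl fun t _ => ?_
          rw [Finset.sum_mul]
  have hform : ∀ Φ : (A ≃ B) → (A ≃ B),
      ∑ ω, μ ω * ∑ gm : ((A ⊕ B) → G) × (A ≃ B), σ ω gm * uMatch u (Φ gm.2) ω
      = ∑ M : A ≃ B, ∑ s, ∑ t,
          (∑ ω, μ ω * ((∑ g : (A ⊕ B) → G, σ ω (g, M)) * U s t ω)) *
          ((univ.filter fun a => tA a = s ∧ tB (Φ M a) = t).card : ℝ) := by
    intro Φ
    have step1 : ∀ ω, ∑ gm : ((A ⊕ B) → G) × (A ≃ B), σ ω gm * uMatch u (Φ gm.2) ω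
        = ∑ M : A ≃ B, (∑ g : (A ⊕ B) → G, σ ω (g, M)) * uMatch u (Φ M) ω := by
      intro ω
      rw [Fintype.sum_prod_type, Finset.sum_comm]
      exact Finset.sum_congr rfl fun M _ => by rw [Finset.sum_mul]
    calc ∑ ω, μ ω * ∑ gm : ((A ⊕ B) → G) × (A ≃ B), σ ω gm * uMatch u (Φ gm.2) ω
        = ∑ ω, ∑ M : A ≃ B, μ ω * ((∑ g : (A ⊕ B) → G, σ ω (g, M)) * uMatch u (Φ M) ω) := by
          refine Finset.sum_congr rfl fun ω _ => ?_
          rw [step1 ω, Finset.mul_sum]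
      _ = ∑ M : A ≃ B, ∑ ω, μ ω * ((∑ g : (A ⊕ B) → G, σ ω (g, M)) * uMatch u (Φ M) ω) :=
          Finset.sum_comm
      _ = _ := Finset.sum_congr rfl fun M _ => hkeyM M (Φ M)
  have hswap : ∀ ω (X : Pref A B × (A ≃ B) → ℝ),
      ∑ s' : Pref A B × (A ≃ B), σ' ω s' * X s'
      = ∑ gm : ((A ⊕ B) → G) × (A ≃ B), σ ω gm * X (Lam gm) := by
    intro ω X
    simp only [hσ', Finset.sum_mul, ite_mul, zero_mul]
    rw [Finset.sum_comm]
    refine Finset.sum_congr rfl fun gm _ => ?_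
    rw [Finset.sum_eq_single_of_mem (Lam gm) (mem_univ _)]
    · rw [if_pos rfl]
    · intro s' _ hs'
      rw [if_neg (fun h => hs' h.symm)]
  -- the grand conclusion
  refine ⟨σ', hσ'pol, ?_, ?_, ?_, ?_, ?_⟩
  · -- stability
    intro s' hpos a b
    obtain ⟨⟨g, M⟩, hLgm, hps⟩ := hwit s' hpos
    have hM' : F M = s'.2 := by rw [← hLgm]
    have hra : s'.1.1 a = RA (tA a) (postPrivA μ σ (cA M a) (g (Sum.inl (cA M a))) M) := by
      rw [← hLgm]
    have hrb : s'.1.2 b = RB (tB b) (postPrivB μ σ (cB M b) (g (Sum.inr (cB M b))) M) := by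
      rw [← hLgm]
    have hcAs := hcAspec M a
    have hcBs := hcBspec M b
    rcases hstab (g, M) hps (cA M a) (cB M b) with hcase | hcase
    · left
      have hbool : s'.1.1 a b (s'.2 a) = true := by
        rw [hra]
        simp only [hRA]
        apply decide_eq_true
        have eA1 : (fun ω => VA (tA a) (tB b) ω) = vA (cA M a) (cB M b) := by
          funext ω
          rw [hvA, hcAs.1, hcBs.1]
        have eA2 : (fun ω => VA (tA a) (tB (s'.2 a)) ω) = vA (cA M a) (M (cA M a)) := by
          funext ω
          rw [hvA, hcAs.1, hcAs.2, hM']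
        rw [eA1, eA2]
        exact hcase
      exact cellA a (s'.1.1 a) s'.2 b (s'.2 a) hbool
    · right
      have hbool : s'.1.2 b a (s'.2.symm b) = true := by
        rw [hrb]
        simp only [hRB]
        apply decide_eq_true
        have eB1 : (fun ω => VB (tB b) (tA a) ω) = vB (cB M b) (cA M a) := by
          funext ω
          rw [hvB, hcBs.1, hcAs.1]
        have eB2 : (fun ω => VB (tB b) (tA (s'.2.symm b)) ω) = vB (cB M b) (M.symm (cB M b)) := by
          funext ω
          rw [hvB, hcBs.1, hcBs.2, hM']
        rw [eB1, eB2]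
        exact hcase
      exact cellB b (s'.1.2 b) s'.2 a (s'.2.symm b) hbool
  · -- indicativeness
    intro s' hpos
    obtain ⟨⟨g, M⟩, hLgm, hps⟩ := hwit s' hpos
    refine ⟨⟨?_, ?_⟩, ?_, ?_⟩
    · intro a
      have hra : s'.1.1 a = RA (tA a) (postPrivA μ σ (cA M a) (g (Sum.inl (cA M a))) M) := by
        rw [← hLgm]
      rw [hra]
      exact hRAtotal _ _
    · intro b
      have hrb : s'.1.2 b = RB (tB b) (postPrivB μ σ (cB M b) (g (Sum.inr (cB M b))) M) := by
        rw [← hLgm]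
      rw [hrb]
      exact hRBtotal _ _
    · intro a y y' h
      exact cellA a (s'.1.1 a) s'.2 y y' h
    · intro b z z' h
      exact cellB b (s'.1.2 b) s'.2 z z' h
  · -- utility
    have lhs_eq : polU μ σ (fun s ω => uMatch u s.2 ω)
        = ∑ ω, μ ω * ∑ gm : ((A ⊕ B) → G) × (A ≃ B), σ ω gm * uMatch u gm.2 ω := rfl
    have rhs_eq : polU μ σ' (fun s ω => uMatch u s.2 ω)
        = ∑ ω, μ ω * ∑ gm : ((A ⊕ B) → G) × (A ≃ B), σ ω gm * uMatch u (F gm.2) ω := by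
      simp only [polU]
      refine Finset.sum_congr rfl fun ω _ => ?_
      congr 1
      have := hswap ω (fun s' => uMatch u s'.2 ω)
      rw [this]
    rw [lhs_eq, rhs_eq]
    have h1 := hform (fun M => M)
    have h2 := hform F
    rw [h1, h2]
    exact Finset.sum_le_sum fun M _ => hFutil M
  · -- Vstar realization
    intro s' hpos
    obtain ⟨⟨g, M⟩, hLgm, hps⟩ := hwit s' hpos
    have hM' : F M = s'.2 := by rw [← hLgm]
    rw [← hM']
    exact hFstar M
  · -- subtype-uniform signals
    intro s' hpos
    obtain ⟨⟨g, M⟩, hLgm, hps⟩ := hwit s' hpos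
    have hM' : F M = s'.2 := by rw [← hLgm]
    constructor
    · intro a a' h1 h2
      have hra : s'.1.1 a = RA (tA a) (postPrivA μ σ (cA M a) (g (Sum.inl (cA M a))) M) := by
        rw [← hLgm]
      have hra' : s'.1.1 a' = RA (tA a') (postPrivA μ σ (cA M a') (g (Sum.inl (cA M a'))) M) := by
        rw [← hLgm]
      have hcc : cA M a = cA M a' := hcAuni M a a' h1 (by rw [hM']; exact h2)
      rw [hra, hra', h1, hcc]
    · intro b b' h1 h2
      have hrb : s'.1.2 b = RB (tB b) (postPrivB μ σ (cB M b) (g (Sum.inr (cB M b))) M) := by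
        rw [← hLgm]
      have hrb' : s'.1.2 b' = RB (tB b') (postPrivB μ σ (cB M b') (g (Sum.inr (cB M b'))) M) := by
        rw [← hLgm]
      have hcc : cB M b = cB M b' := hcBuni M b b' h1 (by rw [hM']; exact h2)
      rw [hrb, hrb', h1, hcc]

end MP
end
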